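/- arXiv:1409.1154 — 11 statements merged into one kernel-verified Lean document; each statement's English description precedes it below -/
import Mathlib

section
/- Let A be an associative algebra, Ω¹ an A-bimodule, and d, d̄ : A → Ω¹ two derivations (satisfying the Leibniz rule). If φ ∈ A is invertible and satisfies d̄φ - (dφ)·φ = 0, then φ⁻¹ satisfies d(φ⁻¹) - (d̄(φ⁻¹))·φ⁻¹ = 0, i.e., exchanging d and d̄ in the 'Riemann equation' corresponds to replacing φ by φ⁻¹. -/
/-!
Differentiating `φ * ψ = 1` with the Leibniz rule gives `d ψ = -ψ (d φ) ψ` for either derivation.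
Substituting `d̄ φ = (d φ) φ` into the formula for `d̄ ψ`, the inner factor `φ ψ` cancels and
`(d̄ ψ) ψ` becomes `-ψ (d φ) ψ = d ψ`.
-/

open MulOpposite

section Leibniz

variable {A Ω : Type*} [Ring A] [AddCommGroup Ω] [Module A Ω] [Module Aᵐᵒᵖ Ω]
  {d : A → Ω} (hd : ∀ a b : A, d (a * b) = op b • d a + a • d b)
include hd

theorem map_one_of_leibniz : d 1 = 0 := by
  simpa using hd 1 1

theorem map_inverse_of_leibniz {φ ψ : A} (hφψ : φ * ψ = 1) (hψφ : ψ * φ = 1) :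
    d ψ = -(ψ • op ψ • d φ) := by
  have hprod : op ψ • d φ + φ • d ψ = 0 := by
    rw [← hd, hφψ, map_one_of_leibniz hd]
  calc d ψ = ψ • φ • d ψ := by rw [smul_smul, hψφ, one_smul]
    _ = -(ψ • op ψ • d φ) := by rw [eq_neg_of_add_eq_zero_right hprod, smul_neg]

end Leibniz

theorem stmt_0_general {A Ω : Type*} [Ring A] [AddCommGroup Ω]
    [Module A Ω] [Module Aᵐᵒᵖ Ω] [SMulCommClass A Aᵐᵒᵖ Ω]
    (d dbar : A → Ω)
    (hd_leib : ∀ a b : A, d (a * b) = MulOpposite.op b • d a + a • d b)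
    (hdbar_leib : ∀ a b : A, dbar (a * b) = MulOpposite.op b • dbar a + a • dbar b)
    (φ ψ : A) (hinv₁ : φ * ψ = 1) (hinv₂ : ψ * φ = 1)
    (hRiemann : dbar φ - MulOpposite.op φ • d φ = 0) :
    d ψ - MulOpposite.op ψ • dbar ψ = 0 := by
  have hdbarφ : dbar φ = op φ • d φ := sub_eq_zero.mp hRiemann
  have hcancel : op ψ • op ψ • dbar φ = op ψ • d φ := by
    rw [hdbarφ, smul_smul, smul_smul, ← op_mul, ← op_mul, ← mul_assoc, hinv₁, one_mul]
  rw [map_inverse_of_leibniz hd_leib hinv₁ hinv₂, map_inverse_of_leibniz hdbar_leib hinv₁ hinv₂,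
    smul_neg, ← smul_comm ψ (op ψ), hcancel, sub_neg_eq_add, neg_add_cancel]

/-- For derivations `d`, `d̄` from an associative algebra `A` into an
`A`-bimodule `Ω`, if an invertible `φ` satisfies the Riemann equation
`d̄φ - (dφ)·φ = 0`, then `φ⁻¹` satisfies `d(φ⁻¹) - (d̄(φ⁻¹))·φ⁻¹ = 0`. -/
theorem stmt_0 {A Ω : Type*} [Ring A] [AddCommGroup Ω]
    [Module A Ω] [Module Aᵐᵒᵖ Ω] [SMulCommClass A Aᵐᵒᵖ Ω]
    (d dbar : A → Ω)
    (hd_add : ∀ a b : A, d (a + b) = d a + d b)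
    (hdbar_add : ∀ a b : A, dbar (a + b) = dbar a + dbar b)
    (hd_leib : ∀ a b : A, d (a * b) = MulOpposite.op b • d a + a • d b)
    (hdbar_leib : ∀ a b : A, dbar (a * b) = MulOpposite.op b • dbar a + a • dbar b)
    (φ ψ : A) (hinv₁ : φ * ψ = 1) (hinv₂ : ψ * φ = 1)
    (hRiemann : dbar φ - MulOpposite.op φ • d φ = 0) :
    d ψ - MulOpposite.op ψ • dbar ψ = 0 :=
  stmt_0_general d dbar hd_leib hdbar_leib φ ψ hinv₁ hinv₂ hRiemann
end

section
/- Let A be an associative algebra with derivations d, d̄ : A → Ω¹. Suppose φ₀ ∈ A solves d̄φ₀ - (dφ₀)·φ₀ + [γ, φ₀] = 0 for some γ ∈ Ω¹, and Φ ∈ A is invertible and solves the linear equation d̄Φ - (dΦ)·φ₀ - Φ·γ = 0. Then φ := Φ·φ₀·Φ⁻¹ solves the Riemann equation d̄φ - (dφ)·φ = 0. -/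
/-!
Write `x·a` for `op a • x`. The gauge `φ = Φ φ₀ Φ⁻¹` is characterised by `φ Φ = Φ φ₀`; applying a
Leibniz map `D` to both sides expresses `(Dφ)·Φ` through `DΦ` and `Dφ₀`, and hence
`(d̄φ - (dφ)·φ)·Φ = L·φ₀ + Φ(d̄φ₀ - (dφ₀)·φ₀) - φ L` with `L = d̄Φ - (dΦ)·φ₀`. The linear equation
says `L = Φγ`, and `φ Φ γ = Φ φ₀ γ`, so the right-hand side is `Φ` times the equation of `φ₀`.
-/

open MulOpposite

section Leibniz

variable {A Ω : Type*} [Ring A] [AddCommGroup Ω] [Module Aᵐᵒᵖ Ω]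

theorem eq_zero_of_op_smul_eq_zero {a b : A} (hab : a * b = 1) {x : Ω} (hx : op a • x = 0) :
    x = 0 := by
  rw [← one_smul Aᵐᵒᵖ x, ← op_one, ← hab, op_mul, mul_smul, hx, smul_zero]

variable [Module A Ω]

theorem op_smul_leibniz_of_mul_eq_mul {D : A → Ω}
    (hD : ∀ a b : A, D (a * b) = op b • D a + a • D b) {φ Φ φ₀ : A} (h : φ * Φ = Φ * φ₀) :
    op Φ • D φ = op φ₀ • D Φ + Φ • D φ₀ - φ • D Φ := by
  rw [eq_sub_iff_add_eq, ← hD, h, hD]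

theorem op_smul_riemann_of_mul_eq_mul [SMulCommClass A Aᵐᵒᵖ Ω] {d dbar : A → Ω}
    (hd : ∀ a b : A, d (a * b) = op b • d a + a • d b)
    (hdbar : ∀ a b : A, dbar (a * b) = op b • dbar a + a • dbar b)
    {φ Φ φ₀ : A} (h : φ * Φ = Φ * φ₀) :
    op Φ • (dbar φ - op φ • d φ) =
      op φ₀ • (dbar Φ - op φ₀ • d Φ) + Φ • (dbar φ₀ - op φ₀ • d φ₀) -
        φ • (dbar Φ - op φ₀ • d Φ) := by
  have hφ : op Φ • op φ • d φ = op φ₀ • op Φ • d φ := by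
    rw [← mul_smul, ← mul_smul, ← op_mul, ← op_mul, h]
  rw [smul_sub, hφ, op_smul_leibniz_of_mul_eq_mul hd h, op_smul_leibniz_of_mul_eq_mul hdbar h]
  simp only [smul_add, smul_sub, ← smul_comm Φ (op φ₀), ← smul_comm φ (op φ₀)]
  abel

end Leibniz

theorem stmt_2_general {A Ω : Type*} [Ring A] [AddCommGroup Ω]
    [Module A Ω] [Module Aᵐᵒᵖ Ω] [SMulCommClass A Aᵐᵒᵖ Ω]
    (d dbar : A → Ω)
    (hd_leib : ∀ a b : A, d (a * b) = MulOpposite.op b • d a + a • d b)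
    (hdbar_leib : ∀ a b : A, dbar (a * b) = MulOpposite.op b • dbar a + a • dbar b)
    (φ₀ Φ Ψ : A) (γ : Ω)
    (hPhiInv₁ : Φ * Ψ = 1) (hPhiInv₂ : Ψ * Φ = 1)
    (hφ₀ : dbar φ₀ - MulOpposite.op φ₀ • d φ₀ + (MulOpposite.op φ₀ • γ - φ₀ • γ) = 0)
    (hPhi : dbar Φ - MulOpposite.op φ₀ • d Φ - Φ • γ = 0) :
    dbar (Φ * φ₀ * Ψ) - MulOpposite.op (Φ * φ₀ * Ψ) • d (Φ * φ₀ * Ψ) = 0 := by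
  have hgauge : Φ * φ₀ * Ψ * Φ = Φ * φ₀ := by rw [mul_assoc _ Ψ, hPhiInv₂, mul_one]
  have hlin : dbar Φ - op φ₀ • d Φ = Φ • γ := sub_eq_zero.mp hPhi
  have hφ₀' : dbar φ₀ - op φ₀ • d φ₀ = φ₀ • γ - op φ₀ • γ := by
    rw [eq_neg_of_add_eq_zero_left hφ₀, neg_sub]
  refine eq_zero_of_op_smul_eq_zero hPhiInv₁ ?_
  rw [op_smul_riemann_of_mul_eq_mul hd_leib hdbar_leib hgauge, hlin, hφ₀', smul_smul _ Φ,
    hgauge, mul_smul, smul_sub, ← smul_comm Φ (op φ₀)]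
  abel

/-- Linearization method (abstract Cole-Hopf transformation).  If
`φ₀` solves `d̄φ₀ - (dφ₀)·φ₀ + [γ,φ₀] = 0` and the invertible `Φ` solves the linear
equation `d̄Φ - (dΦ)·φ₀ - Φ·γ = 0`, then `φ := Φ·φ₀·Φ⁻¹` solves the Riemann equation
`d̄φ - (dφ)·φ = 0`. -/
theorem stmt_2 {A Ω : Type*} [Ring A] [AddCommGroup Ω]
    [Module A Ω] [Module Aᵐᵒᵖ Ω] [SMulCommClass A Aᵐᵒᵖ Ω]
    (d dbar : A → Ω)
    (hd_add : ∀ a b : A, d (a + b) = d a + d b)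
    (hdbar_add : ∀ a b : A, dbar (a + b) = dbar a + dbar b)
    (hd_leib : ∀ a b : A, d (a * b) = MulOpposite.op b • d a + a • d b)
    (hdbar_leib : ∀ a b : A, dbar (a * b) = MulOpposite.op b • dbar a + a • dbar b)
    (φ₀ Φ Ψ : A) (γ : Ω)
    (hPhiInv₁ : Φ * Ψ = 1) (hPhiInv₂ : Ψ * Φ = 1)
    (hφ₀ : dbar φ₀ - MulOpposite.op φ₀ • d φ₀ + (MulOpposite.op φ₀ • γ - φ₀ • γ) = 0)
    (hPhi : dbar Φ - MulOpposite.op φ₀ • d Φ - Φ • γ = 0) :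
    dbar (Φ * φ₀ * Ψ) - MulOpposite.op (Φ * φ₀ * Ψ) • d (Φ * φ₀ * Ψ) = 0 :=
  stmt_2_general d dbar hd_leib hdbar_leib φ₀ Φ Ψ γ hPhiInv₁ hPhiInv₂ hφ₀ hPhi
end

section
/- Let φ be a smooth m×m matrix-valued function of (x,t) satisfying the matrix Riemann equation φ_t = φ_x · φ. Suppose φ commutes with its partial derivatives, and let f be an analytic function of two commuting matrix arguments and A₀, A₁ constant m×m matrices. Then Φ := A₀ + A₁ · f(t·φ + x·I) satisfies Φ_t = Φ_x · φ. -/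
attribute [local instance] Matrix.normedAddCommGroup Matrix.normedSpace

/-- The entire matrix function `M ↦ ∑ cₙ Mⁿ` associated with a power series. -/
noncomputable def matFun {m : ℕ} (c : ℕ → ℝ) (M : Matrix (Fin m) (Fin m) ℝ) :
    Matrix (Fin m) (Fin m) ℝ :=
  ∑' n : ℕ, c n • M ^ n

namespace MyAux
variable {m : ℕ}

local notation "Mat" => Matrix (Fin m) (Fin m) ℝ

lemma norm_mul_le' (A B : Mat) : ‖A * B‖ ≤ (m : ℝ) * ‖A‖ * ‖B‖ := by
  rw [Matrix.norm_le_iff (by positivity)]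
  intro i j
  calc ‖(A * B) i j‖ = ‖∑ k, A i k * B k j‖ := by rw [Matrix.mul_apply]
    _ ≤ ∑ k, ‖A i k * B k j‖ := norm_sum_le _ _
    _ ≤ ∑ _k : Fin m, ‖A‖ * ‖B‖ := by
        refine Finset.sum_le_sum fun k _ => ?_
        rw [norm_mul]
        exact mul_le_mul (A.norm_entry_le_entrywise_sup_norm)
          (B.norm_entry_le_entrywise_sup_norm) (norm_nonneg _) (norm_nonneg _)
    _ = (m : ℝ) * ‖A‖ * ‖B‖ := by simp [mul_assoc]

lemma norm_pow_le' (A : Mat) {K : ℝ} (hK : ‖A‖ ≤ K) (n : ℕ) :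
    ‖A ^ n‖ ≤ max 1 ((m : ℝ) * K) ^ n := by
  induction n with
  | zero =>
    simpa using (Matrix.norm_le_iff zero_le_one).2 fun i j => by
      simp [Matrix.one_apply]; split <;> simp
  | succ n ih =>
    rw [pow_succ]
    calc ‖A ^ n * A‖ ≤ (m : ℝ) * ‖A ^ n‖ * ‖A‖ := norm_mul_le' _ _
      _ = ‖A ^ n‖ * ((m : ℝ) * ‖A‖) := by ring
      _ ≤ max 1 ((m : ℝ) * K) ^ n * max 1 ((m : ℝ) * K) := by
          refine mul_le_mul ih ?_ (by positivity) (by positivity)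
          exact le_trans (by
            have : (0:ℝ) ≤ (m:ℝ) := by positivity
            exact mul_le_mul_of_nonneg_left hK this) (le_max_right _ _)
      _ = max 1 ((m : ℝ) * K) ^ (n + 1) := by rw [pow_succ]

/-- multiplication as a continuous bilinear map -/
noncomputable def mulCLM : Mat →L[ℝ] Mat →L[ℝ] Mat :=
  LinearMap.toContinuousLinearMap
    { toFun := fun A => LinearMap.toContinuousLinearMap (LinearMap.mulLeft ℝ A)
      map_add' := fun A B => by ext x; simp [add_mul]
      map_smul' := fun r A => by ext x; simp [smul_mul_assoc] }

@[simp] lemma mulCLM_apply (A B : Mat) : mulCLM A B = A * B := rfl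

end MyAux

namespace MyAux2
open MyAux
variable {m : ℕ}
local notation "Mat" => Matrix (Fin m) (Fin m) ℝ

lemma hasDerivAt_mul' {f g : ℝ → Mat} {f' g' : Mat} {t : ℝ}
    (hf : HasDerivAt f f' t) (hg : HasDerivAt g g' t) :
    HasDerivAt (fun s => f s * g s) (f' * g t + f t * g') t := by
  letI : NormedAddCommGroup (Mat →L[ℝ] Mat) := ContinuousLinearMap.toNormedAddCommGroup
  letI : NormedSpace ℝ (Mat →L[ℝ] Mat) := ContinuousLinearMap.toNormedSpace
  have h1 : HasDerivAt (fun s => mulCLM (f s)) (mulCLM f') t :=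
    (mulCLM (m := m)).hasFDerivAt.comp_hasDerivAt t hf
  have := h1.clm_apply hg
  exact this

lemma hasDerivAt_pow' {u : ℝ → Mat} {u' : Mat} {t : ℝ}
    (hu : HasDerivAt u u' t) (hc : Commute (u t) u') (n : ℕ) :
    HasDerivAt (fun s => u s ^ n) ((n : ℝ) • (u t ^ (n - 1) * u')) t := by
  induction n with
  | zero => simp; exact hasDerivAt_const t (1 : Mat)
  | succ n ih =>
    have h := hasDerivAt_mul' ih hu
    have hfun : (fun s => u s ^ n * u s) = fun s => u s ^ (n + 1) := by
      funext s; rw [pow_succ]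
    rw [hfun] at h
    convert h using 1
    rcases n with _ | n
    · simp
    · have h1 : u t ^ (n + 1 - 1) * u' * u t = u t ^ (n + 1) * u' := by
        rw [Nat.add_sub_cancel, mul_assoc, hc.symm.eq, ← mul_assoc, ← pow_succ]
      simp only [Nat.add_sub_cancel] at h1
      push_cast
      rw [smul_mul_assoc, h1, add_smul, one_smul]

end MyAux2

namespace MyAux3
open MyAux MyAux2
variable {m : ℕ} {c : ℕ → ℝ}
local notation "Mat" => Matrix (Fin m) (Fin m) ℝ

lemma summable_mul_pow (hentire : ∀ r : ℝ, 0 ≤ r → Summable fun n : ℕ => |c n| * r ^ n)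
    {C : ℝ} (hC : 1 ≤ C) : Summable fun n : ℕ => |c n| * ((n : ℝ) * C ^ n) := by
  have hC0 : (0:ℝ) ≤ C := le_trans zero_le_one hC
  refine Summable.of_nonneg_of_le (fun n => by positivity)
    (fun n => ?_) (hentire (2 * C) (by positivity))
  have hn : (n : ℝ) ≤ 2 ^ n := by
    exact_mod_cast (Nat.lt_two_pow_self (n := n)).le
  calc |c n| * ((n : ℝ) * C ^ n) ≤ |c n| * (2 ^ n * C ^ n) := by
        gcongr
    _ = |c n| * (2 * C) ^ n := by rw [mul_pow]

lemma norm_term_le (n : ℕ) (M D : Mat) {KM KD : ℝ} (hM : ‖M‖ ≤ KM) (hD : ‖D‖ ≤ KD) :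
    ‖c n • ((n : ℝ) • (M ^ (n - 1) * D))‖ ≤
      (|c n| * ((n : ℝ) * (max 1 ((m : ℝ) * KM)) ^ n)) * ((m : ℝ) * KD) := by
  set C : ℝ := max 1 ((m : ℝ) * KM) with hCdef
  have hC : (1:ℝ) ≤ C := le_max_left _ _
  have hC0 : (0:ℝ) ≤ C := le_trans zero_le_one hC
  have hKD : (0:ℝ) ≤ KD := le_trans (norm_nonneg _) hD
  have h1 : ‖M ^ (n - 1) * D‖ ≤ (m : ℝ) * C ^ n * KD := by
    calc ‖M ^ (n - 1) * D‖ ≤ (m : ℝ) * ‖M ^ (n - 1)‖ * ‖D‖ := norm_mul_le' _ _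
      _ ≤ (m : ℝ) * C ^ (n - 1) * KD := by
          gcongr
          exact norm_pow_le' M hM (n - 1)
      _ ≤ (m : ℝ) * C ^ n * KD := by
          have := pow_le_pow_right₀ hC (Nat.sub_le n 1)
          gcongr
  rw [norm_smul, norm_smul, Real.norm_eq_abs, Real.norm_natCast]
  calc |c n| * ((n : ℝ) * ‖M ^ (n - 1) * D‖) ≤ |c n| * ((n : ℝ) * ((m : ℝ) * C ^ n * KD)) := by
        gcongr
    _ = (|c n| * ((n : ℝ) * C ^ n)) * ((m : ℝ) * KD) := by ring

lemma summable_term (hentire : ∀ r : ℝ, 0 ≤ r → Summable fun n : ℕ => |c n| * r ^ n)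
    (M D : Mat) : Summable fun n : ℕ => c n • ((n : ℝ) • (M ^ (n - 1) * D)) := by
  refine Summable.of_norm_bounded
    (((summable_mul_pow hentire (le_max_left 1 ((m : ℝ) * ‖M‖))).mul_right ((m : ℝ) * ‖D‖)))
    (fun n => norm_term_le n M D le_rfl le_rfl)

lemma summable_pow (hentire : ∀ r : ℝ, 0 ≤ r → Summable fun n : ℕ => |c n| * r ^ n)
    {M : Mat} {K : ℝ} (hM : ‖M‖ ≤ K) :
    Summable fun n : ℕ => c n • M ^ n := by
  set C : ℝ := max 1 ((m : ℝ) * K) with hCdef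
  have hC0 : (0:ℝ) ≤ C := le_trans zero_le_one (le_max_left _ _)
  refine Summable.of_norm_bounded (hentire C hC0) (fun n => ?_)
  rw [norm_smul, Real.norm_eq_abs]
  exact mul_le_mul_of_nonneg_left (norm_pow_le' M hM n) (abs_nonneg _)

lemma hasDerivAt_matFun (hentire : ∀ r : ℝ, 0 ≤ r → Summable fun n : ℕ => |c n| * r ^ n)
    {u : ℝ → Mat} (hu : ContDiff ℝ (⊤ : ℕ∞) u)
    (hcomm : ∀ s, Commute (u s) (deriv u s)) (t : ℝ) :
    HasDerivAt (fun s => matFun c (u s))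
      (∑' n : ℕ, c n • ((n : ℝ) • (u t ^ (n - 1) * deriv u t))) t := by
  obtain ⟨K₁, hK₁⟩ := (isCompact_closedBall t 1).exists_bound_of_continuousOn
    hu.continuous.continuousOn
  obtain ⟨K₂, hK₂⟩ := (isCompact_closedBall t 1).exists_bound_of_continuousOn
    ((hu.continuous_deriv (by simp)).continuousOn)
  have hderiv : ∀ s, HasDerivAt u (deriv u s) s := fun s =>
    ((hu.differentiable (by simp)) s).hasDerivAt
  have hC : (1:ℝ) ≤ max 1 ((m : ℝ) * max K₁ 0) := le_max_left _ _
  have key := hasDerivAt_tsum_of_isPreconnected (𝕜 := ℝ)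
    (g := fun n s => c n • u s ^ n)
    (g' := fun n s => c n • ((n : ℝ) • (u s ^ (n - 1) * deriv u s)))
    (u := fun n => (|c n| * ((n : ℝ) * (max 1 ((m : ℝ) * max K₁ 0)) ^ n)) * ((m : ℝ) * max K₂ 0))
    ((summable_mul_pow hentire hC).mul_right _)
    Metric.isOpen_ball (convex_ball t 1).isPreconnected
    (fun n s _ => ((hasDerivAt_pow' (hderiv s) (hcomm s) n).const_smul (c n)))
    (fun n s hs => by
      have hsball : s ∈ Metric.closedBall t 1 := Metric.ball_subset_closedBall hs
      exact norm_term_le n (u s) (deriv u s)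
        (le_trans (hK₁ s hsball) (le_max_left _ _))
        (le_trans (hK₂ s hsball) (le_max_left _ _)))
    (Metric.mem_ball_self one_pos)
    (summable_pow hentire (K := max K₁ 0)
      (le_trans (hK₁ t (Metric.mem_closedBall_self zero_le_one)) (le_max_left _ _)))
    (Metric.mem_ball_self one_pos)
  simp only [matFun]; exact key

end MyAux3

/-- If `φ` solves the matrix Riemann equation `φ_t = φ_x·φ` and commutes with
its partial derivatives, and `f` is an entire (power-series) function, then
`Φ := A₀ + A₁·f(t·φ + x·I)` satisfies `Φ_t = Φ_x·φ`. -/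
theorem stmt_3 {m : ℕ} (c : ℕ → ℝ)
    (hentire : ∀ r : ℝ, 0 ≤ r → Summable fun n : ℕ => |c n| * r ^ n)
    (φ : ℝ → ℝ → Matrix (Fin m) (Fin m) ℝ)
    (hφ : ContDiff ℝ (⊤ : ℕ∞) fun p : ℝ × ℝ => φ p.1 p.2)
    (hcomm_x : ∀ x t, Commute (φ x t) (deriv (fun s => φ s t) x))
    (hcomm_t : ∀ x t, Commute (φ x t) (deriv (fun s => φ x s) t))
    (hRiemann : ∀ x t, deriv (fun s => φ x s) t = deriv (fun s => φ s t) x * φ x t)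
    (A₀ A₁ : Matrix (Fin m) (Fin m) ℝ)
    (Φ : ℝ → ℝ → Matrix (Fin m) (Fin m) ℝ)
    (hΦ : ∀ x t, Φ x t = A₀ + A₁ * matFun c (t • φ x t + x • (1 : Matrix (Fin m) (Fin m) ℝ))) :
    ∀ x t, deriv (fun s => Φ x s) t = deriv (fun s => Φ s t) x * φ x t := by
  intro x t
  have hφx : ∀ y : ℝ, ContDiff ℝ (⊤ : ℕ∞) (fun s => φ y s) := fun y =>
    hφ.comp (contDiff_const.prodMk contDiff_id)
  have hφt : ∀ y : ℝ, ContDiff ℝ (⊤ : ℕ∞) (fun s => φ s y) := fun y =>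
    hφ.comp (contDiff_id.prodMk contDiff_const)
  set u₁ : ℝ → Matrix (Fin m) (Fin m) ℝ := fun s => s • φ x s + x • 1 with hu₁def
  set u₂ : ℝ → Matrix (Fin m) (Fin m) ℝ := fun s => t • φ s t + s • 1 with hu₂def
  have hu₁ : ContDiff ℝ (⊤ : ℕ∞) u₁ := (contDiff_id.smul (hφx x)).add contDiff_const
  have hu₂ : ContDiff ℝ (⊤ : ℕ∞) u₂ :=
    ((contDiff_const (c := t)).smul (hφt t)).add (contDiff_id.smul (contDiff_const (c := (1 : Matrix (Fin m) (Fin m) ℝ))))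
  have hu₁' : ∀ s, HasDerivAt u₁ (s • deriv (fun s' => φ x s') s + φ x s) s := by
    intro s
    have h1 : HasDerivAt (fun s' => φ x s') (deriv (fun s' => φ x s') s) s :=
      (((hφx x).differentiable (by simp)) s).hasDerivAt
    have h2 := (hasDerivAt_id s).smul h1
    have h3 := h2.add_const (x • (1 : Matrix (Fin m) (Fin m) ℝ)); rw [one_smul] at h3; exact h3
  have hu₂' : ∀ s, HasDerivAt u₂ (t • deriv (fun s' => φ s' t) s + 1) s := by
    intro s
    have h1 : HasDerivAt (fun s' => φ s' t) (deriv (fun s' => φ s' t) s) s :=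
      (((hφt t).differentiable (by simp)) s).hasDerivAt
    have h2 := h1.const_smul t
    have h3 := (hasDerivAt_id s).smul_const (1 : Matrix (Fin m) (Fin m) ℝ)
    have h4 := h2.add h3; rw [one_smul] at h4; exact h4
  have hd₁ : ∀ s, deriv u₁ s = s • deriv (fun s' => φ x s') s + φ x s := fun s => (hu₁' s).deriv
  have hd₂ : ∀ s, deriv u₂ s = t • deriv (fun s' => φ s' t) s + 1 := fun s => (hu₂' s).deriv
  have hcomm₁ : ∀ s, Commute (u₁ s) (deriv u₁ s) := by
    intro s
    rw [hd₁ s, hu₁def]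
    show (s • φ x s + x • 1) * _ = _ * (s • φ x s + x • 1)
    simp only [add_mul, mul_add, smul_mul_assoc, mul_smul_comm, one_mul, mul_one]
    rw [(hcomm_t x s).eq]
    module
  have hcomm₂ : ∀ s, Commute (u₂ s) (deriv u₂ s) := by
    intro s
    rw [hd₂ s, hu₂def]
    show (t • φ s t + s • 1) * _ = _ * (t • φ s t + s • 1)
    simp only [add_mul, mul_add, smul_mul_assoc, mul_smul_comm, one_mul, mul_one]
    rw [(hcomm_x s t).eq]
    module
  have h1 := MyAux3.hasDerivAt_matFun hentire hu₁ hcomm₁ t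
  have h2 := MyAux3.hasDerivAt_matFun hentire hu₂ hcomm₂ x
  have e1 : deriv (fun s => Φ x s)  t
      = A₁ * ∑' n : ℕ, c n • ((n : ℝ) • (u₁ t ^ (n - 1) * deriv u₁ t)) := by
    have hfun : (fun s => Φ x s) = fun s => A₀ + MyAux.mulCLM A₁ (matFun c (u₁ s)) := by
      funext s; rw [hΦ]; rfl
    rw [hfun]
    exact (((MyAux.mulCLM A₁).hasFDerivAt.comp_hasDerivAt t h1).const_add A₀).deriv
  have e2 : deriv (fun s => Φ s t) x
      = A₁ * ∑' n : ℕ, c n • ((n : ℝ) • (u₂ x ^ (n - 1) * deriv u₂ x)) := by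
    have hfun : (fun s => Φ s t) = fun s => A₀ + MyAux.mulCLM A₁ (matFun c (u₂ s)) := by
      funext s; rw [hΦ]; rfl
    rw [hfun]
    exact (((MyAux.mulCLM A₁).hasFDerivAt.comp_hasDerivAt x h2).const_add A₀).deriv
  rw [e1, e2, mul_assoc]
  congr 1
  have hmap := ((MyAux.mulCLM (m := m)).flip (φ x t)).map_tsum
    (MyAux3.summable_term hentire (u₂ x) (deriv u₂ x))
  have hflip : ∀ Y : Matrix (Fin m) (Fin m) ℝ, (MyAux.mulCLM (m := m)).flip (φ x t) Y = Y * φ x t :=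
    fun Y => rfl
  rw [hflip] at hmap
  refine Eq.trans ?_ hmap.symm
  refine tsum_congr fun n => ?_
  simp only [hflip, smul_mul_assoc, mul_assoc]
  have harg : u₁ t = u₂ x := by rw [hu₁def, hu₂def]
  have hder : deriv u₂ x * φ x t = deriv u₁ t := by
    rw [hd₁ t, hd₂ x, add_mul, smul_mul_assoc, one_mul, hRiemann x t]
  rw [harg, hder]
end

section
/- Let Φ : ℤ × ℝ → GL(m,ℝ) be a smooth (in t) invertible-matrix-valued function satisfying the semi-discrete transport equation Φ_t(k,t) = Φ(k+1,t) - Φ(k,t). Then φ(k,t) := Φ(k,t)·Φ(k-1,t)⁻¹ satisfies the semi-discrete matrix Riemann equation φ_t(k,t) = (φ(k+1,t) - φ(k,t))·φ(k,t). -/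
open Matrix

theorem HasDerivAt.matrix_mul_inv {𝕜 n : Type*} [NontriviallyNormedField 𝕜]
    [CompleteSpace 𝕜] [Fintype n] [DecidableEq n] {f g : 𝕜 → Matrix n n 𝕜}
    {f' g' : Matrix n n 𝕜} {t : 𝕜}
    (hf : HasDerivAt f f' t) (hg : HasDerivAt g g' t) (hu : IsUnit (g t)) :
    HasDerivAt (fun s => f s * (g s)⁻¹) ((f' - f t * (g t)⁻¹ * g') * (g t)⁻¹) t := by
  -- `HasDerivAt` only sees the topology, which the submultiplicative ℓ∞ operator norm also
  -- induces; instance search does not see that this norm is complete, so we supply it.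
  let : NormedRing (Matrix n n 𝕜) := Matrix.linftyOpNormedRing
  let : NormedAlgebra 𝕜 (Matrix n n 𝕜) := Matrix.linftyOpNormedAlgebra
  have := @instHasSummableGeomSeriesOfCompleteSpace _ _
    (FiniteDimensional.complete 𝕜 (Matrix n n 𝕜))
  obtain ⟨u, hu⟩ := hu
  have hinv : HasDerivAt (fun s => (g s)⁻¹) (-((g t)⁻¹ * g' * (g t)⁻¹)) t := by
    simp only [nonsing_inv_eq_ringInverse]
    exact ((hu ▸ hasFDerivAt_ringInverse (𝕜 := 𝕜) u).comp_hasDerivAt t hg).congr_deriv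
      (by simp [hu, nonsing_inv_eq_ringInverse])
  exact (hf.mul hinv).congr_deriv (by noncomm_ring)

/-- Semi-discrete Cole-Hopf transformation.  If the invertible-matrix-valued
`Φ(k,t)` satisfies the semi-discrete transport equation `Φ_t(k,t) = Φ(k+1,t) - Φ(k,t)`,
then `φ(k,t) := Φ(k,t)·Φ(k-1,t)⁻¹` satisfies the semi-discrete matrix Riemann equation
`φ_t = (φ⁺ - φ)·φ`. -/
theorem stmt_4 {m : ℕ} (Φ : ℤ → ℝ → Matrix (Fin m) (Fin m) ℝ)
    (hinv : ∀ k t, IsUnit (Φ k t))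
    (hΦ : ∀ k t, HasDerivAt (Φ k) (Φ (k + 1) t - Φ k t) t)
    (φ : ℤ → ℝ → Matrix (Fin m) (Fin m) ℝ)
    (hφ : ∀ k t, φ k t = Φ k t * (Φ (k - 1) t)⁻¹) :
    ∀ k t, HasDerivAt (φ k) ((φ (k + 1) t - φ k t) * φ k t) t := by
  intro k t
  have hprev : HasDerivAt (Φ (k - 1)) (Φ k t - Φ (k - 1) t) t := by
    simpa using hΦ (k - 1) t
  rw [hφ (k + 1) t, hφ k t, add_sub_cancel_right, show φ k = _ from funext (hφ k)]
  convert (hΦ k t).matrix_mul_inv hprev (hinv (k - 1) t) using 1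
  -- with `A = Φ k t`, `B = Φ (k - 1) t`, both sides reduce to
  -- `(Φ (k + 1) t - A * B⁻¹ * A) * B⁻¹`
  have hA := (isUnit_iff_isUnit_det _).mp (hinv k t)
  have hB := (isUnit_iff_isUnit_det _).mp (hinv (k - 1) t)
  simp only [sub_mul, mul_sub, mul_assoc, nonsing_inv_mul_cancel_left _ _ hA,
    nonsing_inv_mul _ hB]
  noncomm_ring
end

section
/- For real constants λ₁,…,λₙ and γ₁,…,γₙ, define Φ(k,t) = 1 + Σᵢ exp(λᵢ·k + (e^{λᵢ} - 1)·t + γᵢ) for k ∈ ℤ, t ∈ ℝ. Then Φ satisfies Φ_t(k,t) = Φ(k+1,t) - Φ(k,t), and consequently φ(k,t) := Φ(k,t)/Φ(k-1,t) is a (positive, hence well-defined) solution of the scalar semi-discrete Riemann equation φ_t = (φ⁺ - φ)·φ, where φ⁺(k,t) = φ(k+1,t). -/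
/-!
Each exponential mode `exp (λ k + (e^λ - 1) t + γ)` solves the linear semi-discrete transport
equation `Φ_t = Φ⁺ - Φ`, since shifting `k` by one multiplies it by `e^λ`; so does every constant,
and the equation is linear, so `Φ` solves it too. For any nonvanishing solution `Φ`, the quotient
rule turns `Φ_t = Φ⁺ - Φ` into `φ_t = (φ⁺ - φ) φ` for `φ = Φ / Φ⁻` (semi-discrete Cole–Hopf).
-/

open Finset

variable {𝕜 : Type*} [NontriviallyNormedField 𝕜]

def IsShiftTransportSolution (F : ℤ → 𝕜 → 𝕜) : Prop :=
  ∀ k t, HasDerivAt (F k) (F (k + 1) t - F k t) t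

namespace IsShiftTransportSolution

theorem const (c : 𝕜) : IsShiftTransportSolution fun (_ : ℤ) (_ : 𝕜) => c := by
  intro k t
  simpa using hasDerivAt_const t c

theorem add {F G : ℤ → 𝕜 → 𝕜} (hF : IsShiftTransportSolution F)
    (hG : IsShiftTransportSolution G) : IsShiftTransportSolution fun k t => F k t + G k t := by
  intro k t
  exact ((hF k t).add (hG k t)).congr_deriv (by ring)

theorem sum {ι : Type*} (s : Finset ι) {F : ι → ℤ → 𝕜 → 𝕜}
    (hF : ∀ i ∈ s, IsShiftTransportSolution (F i)) :
    IsShiftTransportSolution fun k t => ∑ i ∈ s, F i k t := by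
  intro k t
  rw [← sum_sub_distrib]
  exact HasDerivAt.fun_sum fun i hi => hF i hi k t

theorem hasDerivAt_coleHopf {F φ : ℤ → 𝕜 → 𝕜} (hF : IsShiftTransportSolution F)
    (hF₀ : ∀ k t, F k t ≠ 0) (hφ : ∀ k t, φ k t = F k t / F (k - 1) t) (k : ℤ) (t : 𝕜) :
    HasDerivAt (φ k) ((φ (k + 1) t - φ k t) * φ k t) t := by
  obtain rfl : φ = fun k t => F k t / F (k - 1) t := funext₂ hφ
  have hprev := hF (k - 1) t
  rw [sub_add_cancel] at hprev
  refine ((hF k t).div hprev (hF₀ (k - 1) t)).congr_deriv ?_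
  have := hF₀ k t
  have := hF₀ (k - 1) t
  simp only [add_sub_cancel_right]
  field_simp
  ring

end IsShiftTransportSolution

theorem isShiftTransportSolution_exp_mode (lam γ : ℝ) :
    IsShiftTransportSolution fun (k : ℤ) t =>
      Real.exp (lam * (k : ℝ) + (Real.exp lam - 1) * t + γ) := by
  intro k t
  have hexponent : HasDerivAt (fun s : ℝ => lam * (k : ℝ) + (Real.exp lam - 1) * s + γ)
      (Real.exp lam - 1) t := by
    simpa using (((hasDerivAt_id t).const_mul (Real.exp lam - 1)).const_add
      (lam * (k : ℝ))).add_const γ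
  have hshift : Real.exp (lam * ((k + 1 : ℤ) : ℝ) + (Real.exp lam - 1) * t + γ)
      = Real.exp lam * Real.exp (lam * (k : ℝ) + (Real.exp lam - 1) * t + γ) := by
    rw [← Real.exp_add]
    push_cast
    ring_nf
  show HasDerivAt _ (Real.exp (lam * ((k + 1 : ℤ) : ℝ) + (Real.exp lam - 1) * t + γ) - _) t
  rw [hshift, ← sub_one_mul, mul_comm]
  exact hexponent.exp

/-- The explicit function `Φ(k,t) = 1 + Σᵢ exp(λᵢk + (e^{λᵢ}-1)t + γᵢ)`
solves the semi-discrete transport equation, is positive, and its Cole-Hopf transform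
`φ = Φ/Φ⁻` solves the scalar semi-discrete Riemann equation `φ_t = (φ⁺ - φ)·φ`. -/
theorem stmt_5 (n : ℕ) (lam γ : Fin n → ℝ)
    (Φ φ : ℤ → ℝ → ℝ)
    (hΦ : ∀ k t, Φ k t =
      1 + ∑ i, Real.exp (lam i * (k : ℝ) + (Real.exp (lam i) - 1) * t + γ i))
    (hφ : ∀ k t, φ k t = Φ k t / Φ (k - 1) t) :
    (∀ k t, HasDerivAt (Φ k) (Φ (k + 1) t - Φ k t) t) ∧
    (∀ k t, 0 < Φ k t) ∧
    (∀ k t, HasDerivAt (φ k) ((φ (k + 1) t - φ k t) * φ k t) t) := by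
  have hΦ_eq : Φ = fun (k : ℤ) t =>
      1 + ∑ i, Real.exp (lam i * (k : ℝ) + (Real.exp (lam i) - 1) * t + γ i) := funext₂ hΦ
  have hsol : IsShiftTransportSolution Φ := hΦ_eq ▸
    (IsShiftTransportSolution.const 1).add <| IsShiftTransportSolution.sum univ
      fun i _ => isShiftTransportSolution_exp_mode (lam i) (γ i)
  have hpos : ∀ k t, 0 < Φ k t := fun k t => by
    rw [hΦ]
    positivity
  exact ⟨hsol, hpos, hsol.hasDerivAt_coleHopf (fun k t => (hpos k t).ne') hφ⟩
end

section
/- Let Φ : ℤ² → GL(m,ℝ) satisfy the linear partial difference equation Φ(k₀+1,k₁) - Φ(k₀,k₁) = -Φ(k₀,k₁+1). Then φ(k₀,k₁) := Φ(k₀,k₁)·Φ(k₀-1,k₁)⁻¹ satisfies the discrete matrix Riemann equation φ_{,1} - φ = (φ_{,1} - φ_{,0})·φ, where φ_{,0}(k₀,k₁) = φ(k₀+1,k₁) and φ_{,1}(k₀,k₁) = φ(k₀,k₁+1). -/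
/-- Discrete Cole-Hopf transformation.  If the invertible-matrix-valued
`Φ(k₀,k₁)` satisfies `Φ(k₀+1,k₁) - Φ(k₀,k₁) = -Φ(k₀,k₁+1)`, then
`φ(k₀,k₁) := Φ(k₀,k₁)·Φ(k₀-1,k₁)⁻¹` satisfies the discrete matrix Riemann equation
`φ_{,1} - φ = (φ_{,1} - φ_{,0})·φ`. -/
theorem stmt_6 {m : ℕ} (Φ : ℤ → ℤ → Matrix (Fin m) (Fin m) ℝ)
    (hinv : ∀ k₀ k₁, IsUnit (Φ k₀ k₁))
    (hΦ : ∀ k₀ k₁, Φ (k₀ + 1) k₁ - Φ k₀ k₁ = -Φ k₀ (k₁ + 1))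
    (φ : ℤ → ℤ → Matrix (Fin m) (Fin m) ℝ)
    (hφ : ∀ k₀ k₁, φ k₀ k₁ = Φ k₀ k₁ * (Φ (k₀ - 1) k₁)⁻¹) :
    ∀ k₀ k₁, φ k₀ (k₁ + 1) - φ k₀ k₁ = (φ k₀ (k₁ + 1) - φ (k₀ + 1) k₁) * φ k₀ k₁ := by
  intro k₀ k₁
  set A := Φ k₀ (k₁ + 1) with hA
  set B := Φ (k₀ - 1) (k₁ + 1) with hBdef
  set C := Φ k₀ k₁ with hCdef
  set D := Φ (k₀ - 1) k₁ with hDdef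
  set E := Φ (k₀ + 1) k₁ with hEdef
  have hB : B⁻¹ * B = 1 :=
    Matrix.nonsing_inv_mul _ ((Matrix.isUnit_iff_isUnit_det _).mp (hinv _ _))
  have hC : C⁻¹ * C = 1 :=
    Matrix.nonsing_inv_mul _ ((Matrix.isUnit_iff_isUnit_det _).mp (hinv _ _))
  have hD : D * D⁻¹ = 1 :=
    Matrix.mul_nonsing_inv _ ((Matrix.isUnit_iff_isUnit_det _).mp (hinv _ _))
  have hE : E = C - A := by
    have h := hΦ k₀ k₁
    rw [← hA, ← hCdef, ← hEdef] at h
    linear_combination (norm := abel) h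
  have hCD : C = D - B := by
    have h := hΦ (k₀ - 1) k₁
    rw [show k₀ - 1 + 1 = k₀ by ring] at h
    rw [← hCdef, ← hDdef, ← hBdef] at h
    linear_combination (norm := abel) h
  rw [hφ k₀ (k₁ + 1), hφ k₀ k₁, hφ (k₀ + 1) k₁,
    show k₀ + 1 - 1 = k₀ by ring]
  have h1 : B⁻¹ * C = B⁻¹ * D - 1 := by rw [hCD, mul_sub, hB]
  calc A * B⁻¹ - C * D⁻¹
      = A * (B⁻¹ * D) * D⁻¹ - A * D⁻¹ - ((C - A) * D⁻¹) := by
        rw [mul_assoc A (B⁻¹ * D) D⁻¹, mul_assoc B⁻¹ D D⁻¹, hD, mul_one]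
        noncomm_ring
    _ = A * (B⁻¹ * D - 1) * D⁻¹ - (C - A) * D⁻¹ := by noncomm_ring
    _ = A * (B⁻¹ * C) * D⁻¹ - E * (C⁻¹ * C) * D⁻¹ := by rw [h1, hC, hE, mul_one]
    _ = (A * B⁻¹ - E * C⁻¹) * (C * D⁻¹) := by noncomm_ring
end

section
/- For real constants γ₁,…,γₙ₊₁ > 0 and 0 < λ₁,…,λₙ₊₁ < 1, define Φ(k₀,k₁) = Σᵢ γᵢ·λᵢ^{k₀}·(1-λᵢ)^{k₁}. Then Φ satisfies Φ(k₀+1,k₁) - Φ(k₀,k₁) = -Φ(k₀,k₁+1), Φ > 0 everywhere, and φ := Φ(k₀,k₁)/Φ(k₀-1,k₁) is a regular solution of the scalar discrete Riemann equation φ_{,1} - φ = (φ_{,1} - φ_{,0})·φ. -/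
/-- The explicit function `Φ(k₀,k₁) = Σᵢ γᵢ λᵢ^{k₀} (1-λᵢ)^{k₁}` with
`γᵢ > 0`, `0 < λᵢ < 1`, solves the linear difference equation
`Φ(k₀+1,k₁) - Φ(k₀,k₁) = -Φ(k₀,k₁+1)`, is positive, and its discrete Cole-Hopf
transform `φ = Φ(k₀,k₁)/Φ(k₀-1,k₁)` is a regular solution of the scalar discrete
Riemann equation `φ_{,1} - φ = (φ_{,1} - φ_{,0})·φ`. -/
theorem stmt_7 (n : ℕ) (γ lam : Fin (n + 1) → ℝ)
    (hγ : ∀ i, 0 < γ i) (hlam0 : ∀ i, 0 < lam i) (hlam1 : ∀ i, lam i < 1)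
    (Φ φ : ℤ → ℤ → ℝ)
    (hΦ : ∀ k₀ k₁, Φ k₀ k₁ = ∑ i, γ i * lam i ^ k₀ * (1 - lam i) ^ k₁)
    (hφ : ∀ k₀ k₁, φ k₀ k₁ = Φ k₀ k₁ / Φ (k₀ - 1) k₁) :
    (∀ k₀ k₁, Φ (k₀ + 1) k₁ - Φ k₀ k₁ = -Φ k₀ (k₁ + 1)) ∧
    (∀ k₀ k₁, 0 < Φ k₀ k₁) ∧
    (∀ k₀ k₁, φ k₀ (k₁ + 1) - φ k₀ k₁ = (φ k₀ (k₁ + 1) - φ (k₀ + 1) k₁) * φ k₀ k₁) := by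
  have hlin : ∀ k₀ k₁, Φ (k₀ + 1) k₁ - Φ k₀ k₁ = -Φ k₀ (k₁ + 1) := by
    intro k₀ k₁
    simp only [hΦ, ← Finset.sum_sub_distrib, ← Finset.sum_neg_distrib]
    refine Finset.sum_congr rfl fun i _ => ?_
    have h0 : lam i ≠ 0 := (hlam0 i).ne'
    rw [zpow_add_one₀ h0, zpow_add_one₀ (by nlinarith [hlam1 i] : (1 : ℝ) - lam i ≠ 0)]
    ring
  have hpos : ∀ k₀ k₁, 0 < Φ k₀ k₁ := by
    intro k₀ k₁
    rw [hΦ]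
    refine Finset.sum_pos (fun i _ => ?_) ⟨0, Finset.mem_univ 0⟩
    have := hγ i
    have := zpow_pos (hlam0 i) k₀
    have := zpow_pos (by linarith [hlam1 i] : (0:ℝ) < 1 - lam i) k₁
    positivity
  refine ⟨hlin, hpos, fun k₀ k₁ => ?_⟩
  have hA := (hpos (k₀ - 1) k₁).ne'
  have hB := (hpos k₀ k₁).ne'
  have hC := (hpos (k₀ - 1) (k₁ + 1)).ne'
  have hE : Φ (k₀ + 1) k₁ - Φ k₀ k₁ = -Φ k₀ (k₁ + 1) := hlin k₀ k₁
  have hD : Φ (k₀ - 1 + 1) k₁ - Φ (k₀ - 1) k₁ = -Φ (k₀ - 1) (k₁ + 1) := hlin (k₀ - 1) k₁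
  rw [sub_add_cancel] at hD
  have hE' : Φ (k₀ + 1) k₁ = Φ k₀ k₁ - Φ k₀ (k₁ + 1) := by linarith
  have hA' : Φ (k₀ - 1) k₁ = Φ k₀ k₁ + Φ (k₀ - 1) (k₁ + 1) := by linarith
  have hBC : Φ k₀ k₁ + Φ (k₀ - 1) (k₁ + 1) ≠ 0 := by have := hpos k₀ k₁; have := hpos (k₀ - 1) (k₁ + 1); positivity
  simp only [hφ, add_sub_cancel_right]
  rw [hE', hA']
  field_simp
  ring
end

section
/- Let Φ : ℝ² → GL(m,ℝ) be smooth and satisfy the heat equation α·Φ_y = Φ_{xx} for a nonzero constant α. Then φ := Φ_x·Φ⁻¹ satisfies the matrix Burgers equation α·φ_y - φ_{xx} - 2·φ_x·φ = 0. -/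
attribute [local instance] Matrix.normedAddCommGroup Matrix.normedSpace

lemma two_le_inf : (2 : WithTop ℕ∞) ≤ ((⊤:ℕ∞) : WithTop ℕ∞) := by
  exact WithTop.coe_le_coe.2 le_top


/-- Partial derivative in the first variable of a function of two real variables. -/
noncomputable def pdX {E : Type*} [NormedAddCommGroup E] [NormedSpace ℝ E]
    (f : ℝ → ℝ → E) : ℝ → ℝ → E := fun x y => deriv (fun s => f s y) x

/-- Partial derivative in the second variable of a function of two real variables. -/
noncomputable def pdY {E : Type*} [NormedAddCommGroup E] [NormedSpace ℝ E]
    (f : ℝ → ℝ → E) : ℝ → ℝ → E := fun x y => deriv (fun s => f x s) y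

section aux

variable {E : Type*} [NormedAddCommGroup E] [NormedSpace ℝ E]

/-- Partial derivative in the first variable, uncurried form. -/
noncomputable def px (g : ℝ × ℝ → E) : ℝ × ℝ → E := fun p => fderiv ℝ g p (1, 0)

/-- Partial derivative in the second variable, uncurried form. -/
noncomputable def py (g : ℝ × ℝ → E) : ℝ × ℝ → E := fun p => fderiv ℝ g p (0, 1)

lemma px_contDiff {g : ℝ × ℝ → E} (hg : ContDiff ℝ (⊤:ℕ∞) g) : ContDiff ℝ (⊤:ℕ∞) (px g) :=
  (hg.fderiv_right (by simp)).clm_apply contDiff_const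

lemma py_contDiff {g : ℝ × ℝ → E} (hg : ContDiff ℝ (⊤:ℕ∞) g) : ContDiff ℝ (⊤:ℕ∞) (py g) :=
  (hg.fderiv_right (by simp)).clm_apply contDiff_const

lemma hasDerivAt_fst {g : ℝ × ℝ → E} (hg : ContDiff ℝ (⊤:ℕ∞) g) (x y : ℝ) :
    HasDerivAt (fun s => g (s, y)) (px g (x, y)) x := by
  have h1 : HasFDerivAt g (fderiv ℝ g (x, y)) (x, y) :=
    (hg.differentiable (by simp) (x, y)).hasFDerivAt
  have h2 : HasDerivAt (fun s : ℝ => (s, y)) ((1 : ℝ), (0 : ℝ)) x :=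
    HasDerivAt.prodMk (hasDerivAt_id x) (hasDerivAt_const x y)
  exact h1.comp_hasDerivAt x h2

lemma hasDerivAt_snd {g : ℝ × ℝ → E} (hg : ContDiff ℝ (⊤:ℕ∞) g) (x y : ℝ) :
    HasDerivAt (fun t => g (x, t)) (py g (x, y)) y := by
  have h1 : HasFDerivAt g (fderiv ℝ g (x, y)) (x, y) :=
    (hg.differentiable (by simp) (x, y)).hasFDerivAt
  have h2 : HasDerivAt (fun t : ℝ => (x, t)) ((0 : ℝ), (1 : ℝ)) y :=
    HasDerivAt.prodMk (hasDerivAt_const y x) (hasDerivAt_id y)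
  exact h1.comp_hasDerivAt y h2

lemma pdX_eq {f : ℝ → ℝ → E} (hf : ContDiff ℝ (⊤:ℕ∞) fun p : ℝ × ℝ => f p.1 p.2) (x y : ℝ) :
    pdX f x y = px (fun p : ℝ × ℝ => f p.1 p.2) (x, y) :=
  (hasDerivAt_fst hf x y).deriv

lemma pdY_eq {f : ℝ → ℝ → E} (hf : ContDiff ℝ (⊤:ℕ∞) fun p : ℝ × ℝ => f p.1 p.2) (x y : ℝ) :
    pdY f x y = py (fun p : ℝ × ℝ => f p.1 p.2) (x, y) :=
  (hasDerivAt_snd hf x y).deriv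

lemma px_sub {g h : ℝ × ℝ → E} (hg : ContDiff ℝ (⊤:ℕ∞) g) (hh : ContDiff ℝ (⊤:ℕ∞) h)
    (p : ℝ × ℝ) : px (fun q => g q - h q) p = px g p - px h p := by
  unfold px
  rw [fderiv_fun_sub (hg.differentiable (by simp) p) (hh.differentiable (by simp) p)]
  simp

lemma px_smul {g : ℝ × ℝ → E} (hg : ContDiff ℝ (⊤:ℕ∞) g) (c : ℝ) (p : ℝ × ℝ) :
    px (fun q => c • g q) p = c • px g p := by
  unfold px
  rw [fderiv_fun_const_smul (hg.differentiable (by simp) p) c]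
  simp

/-- Clairaut: mixed partials commute for smooth functions. -/
lemma px_py {g : ℝ × ℝ → E} (hg : ContDiff ℝ (⊤:ℕ∞) g) (p : ℝ × ℝ) :
    px (py g) p = py (px g) p := by
  have hsymm : IsSymmSndFDerivAt ℝ g p :=
    hg.contDiffAt.isSymmSndFDerivAt (by rw [minSmoothness_of_isRCLikeNormedField]; exact two_le_inf)
  have hd : HasFDerivAt (fderiv ℝ g) (fderiv ℝ (fderiv ℝ g) p) p :=
    (((hg.fderiv_right (m := (⊤:ℕ∞)) (by simp)).differentiable (by simp)) p).hasFDerivAt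
  have e1 : px (py g) p = fderiv ℝ (fderiv ℝ g) p (1, 0) (0, 1) := by
    have h2 : HasFDerivAt (fun q => fderiv ℝ g q ((0:ℝ), (1:ℝ)))
        ((fderiv ℝ g p).comp (0 : (ℝ × ℝ) →L[ℝ] ℝ × ℝ)
          + (fderiv ℝ (fderiv ℝ g) p).flip ((0:ℝ), (1:ℝ))) p :=
      hd.clm_apply (hasFDerivAt_const _ _)
    have := h2.fderiv
    unfold px py
    rw [this]
    simp
  have e2 : py (px g) p = fderiv ℝ (fderiv ℝ g) p (0, 1) (1, 0) := by
    have h2 : HasFDerivAt (fun q => fderiv ℝ g q ((1:ℝ), (0:ℝ)))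
        ((fderiv ℝ g p).comp (0 : (ℝ × ℝ) →L[ℝ] ℝ × ℝ)
          + (fderiv ℝ (fderiv ℝ g) p).flip ((1:ℝ), (0:ℝ))) p :=
      hd.clm_apply (hasFDerivAt_const _ _)
    have := h2.fderiv
    unfold px py
    rw [this]
    simp
  rw [e1, e2, hsymm.eq]

end aux

section matrixaux

variable {m : ℕ}

noncomputable def mulL (m : ℕ) :
    Matrix (Fin m) (Fin m) ℝ →L[ℝ] Matrix (Fin m) (Fin m) ℝ →L[ℝ] Matrix (Fin m) (Fin m) ℝ :=
  LinearMap.toContinuousLinearMap <|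
    { toFun := fun A => LinearMap.toContinuousLinearMap (LinearMap.mulLeft ℝ A)
      map_add' := fun A B => by ext C; simp [add_mul]
      map_smul' := fun r A => by ext C; simp [smul_mul_assoc] }

@[simp] lemma mulL_apply (A B : Matrix (Fin m) (Fin m) ℝ) : mulL m A B = A * B := rfl

lemma contDiff_mul' {g h : ℝ × ℝ → Matrix (Fin m) (Fin m) ℝ}
    (hg : ContDiff ℝ (⊤:ℕ∞) g) (hh : ContDiff ℝ (⊤:ℕ∞) h) :
    ContDiff ℝ (⊤:ℕ∞) (fun q => g q * h q) := by
  have : (fun q => g q * h q) = fun q => mulL m (g q) (h q) := rfl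
  rw [this]
  exact ((mulL m).contDiff.comp hg).clm_apply hh

lemma px_mul {g h : ℝ × ℝ → Matrix (Fin m) (Fin m) ℝ}
    (hg : ContDiff ℝ (⊤:ℕ∞) g) (hh : ContDiff ℝ (⊤:ℕ∞) h) (p : ℝ × ℝ) :
    px (fun q => g q * h q) p = px g p * h p + g p * px h p := by
  have Hg : HasFDerivAt g (fderiv ℝ g p) p := (hg.differentiable (by simp) p).hasFDerivAt
  have Hh : HasFDerivAt h (fderiv ℝ h p) p := (hh.differentiable (by simp) p).hasFDerivAt
  have H := ((mulL m).hasFDerivAt_of_bilinear Hg Hh).fderiv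
  have e : (fun q => g q * h q) = fun q => mulL m (g q) (h q) := rfl
  unfold px
  rw [e]; erw [H]
  exact add_comm _ _

lemma py_mul {g h : ℝ × ℝ → Matrix (Fin m) (Fin m) ℝ}
    (hg : ContDiff ℝ (⊤:ℕ∞) g) (hh : ContDiff ℝ (⊤:ℕ∞) h) (p : ℝ × ℝ) :
    py (fun q => g q * h q) p = py g p * h p + g p * py h p := by
  have Hg : HasFDerivAt g (fderiv ℝ g p) p := (hg.differentiable (by simp) p).hasFDerivAt
  have Hh : HasFDerivAt h (fderiv ℝ h p) p := (hh.differentiable (by simp) p).hasFDerivAt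
  have H := ((mulL m).hasFDerivAt_of_bilinear Hg Hh).fderiv
  have e : (fun q => g q * h q) = fun q => mulL m (g q) (h q) := rfl
  unfold py
  rw [e]; erw [H]
  exact add_comm _ _

lemma contDiff_entry {A : ℝ × ℝ → Matrix (Fin m) (Fin m) ℝ}
    (hA : ContDiff ℝ (⊤:ℕ∞) A) (i j : Fin m) : ContDiff ℝ (⊤:ℕ∞) fun p => A p i j :=
  (contDiff_pi.1 ((contDiff_pi.1 hA) i)) j

lemma contDiff_det {A : ℝ × ℝ → Matrix (Fin m) (Fin m) ℝ}
    (hA : ContDiff ℝ (⊤:ℕ∞) A) : ContDiff ℝ (⊤:ℕ∞) fun p => (A p).det := by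
  simp_rw [Matrix.det_apply']
  exact ContDiff.sum fun σ _ =>
    contDiff_const.mul (contDiff_prod fun i _ => contDiff_entry hA _ _)

lemma contDiff_inv' {A : ℝ × ℝ → Matrix (Fin m) (Fin m) ℝ}
    (hA : ContDiff ℝ (⊤:ℕ∞) A) (h : ∀ p, IsUnit (A p)) :
    ContDiff ℝ (⊤:ℕ∞) fun p => (A p)⁻¹ := by
  have hdet : ∀ p, (A p).det ≠ 0 := fun p =>
    IsUnit.ne_zero ((Matrix.isUnit_iff_isUnit_det _).1 (h p))
  have e : (fun p => (A p)⁻¹) = fun p => ((A p).det)⁻¹ • (A p).adjugate := by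
    funext p
    rw [Matrix.inv_def, Ring.inverse_eq_inv']
  rw [e]
  refine ContDiff.smul ((contDiff_det hA).inv hdet) ?_
  refine contDiff_pi.2 fun i => contDiff_pi.2 fun j => ?_
  simp_rw [Matrix.adjugate_apply]
  refine contDiff_det ?_
  refine contDiff_pi.2 fun k => contDiff_pi.2 fun l => ?_
  simp only [Matrix.updateRow_apply]
  by_cases hk : k = j
  · simp only [hk, Matrix.updateRow_self, if_pos rfl]
    exact contDiff_const
  · simp only [hk, if_false]
    exact contDiff_entry hA _ _

end matrixaux

section burgers

variable {m : ℕ}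

local notation "M" => Matrix (Fin m) (Fin m) ℝ

lemma smul_mul_left' (c : ℝ) (X Y : M) : c • (X * Y) = (c • X) * Y :=
  (smul_mul_assoc c X Y).symm

lemma smul_mul_right' (c : ℝ) (X Y : M) : c • (X * Y) = X * (c • Y) :=
  (mul_smul_comm c X Y).symm

lemma smul_sandwich (c : ℝ) (X Y Z : M) : c • (X * Y * Z) = X * (c • Y) * Z := by
  rw [smul_mul_left', smul_mul_right']

lemma burgers_aux (α : ℝ) (A W f : ℝ × ℝ → M)
    (hA : ContDiff ℝ (⊤:ℕ∞) A) (hU : ∀ q, IsUnit (A q))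
    (hheat' : ∀ q, α • py A q = px (px A) q)
    (hWdef : W = fun q => (A q)⁻¹) (hfdef : f = fun q => px A q * W q) (p : ℝ × ℝ) :
    α • py f p - px (px f) p - (2 : ℝ) • (px f p * f p) = 0 := by
  have hdet : ∀ q, IsUnit (A q).det := fun q => (Matrix.isUnit_iff_isUnit_det _).1 (hU q)
  have hW : ContDiff ℝ (⊤:ℕ∞) W := hWdef ▸ contDiff_inv' hA hU
  have hAW : ∀ q, A q * W q = 1 := fun q => by
    rw [hWdef]; exact Matrix.mul_nonsing_inv _ (hdet q)
  have hWA : ∀ q, W q * A q = 1 := fun q => by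
    rw [hWdef]; exact Matrix.nonsing_inv_mul _ (hdet q)
  have hpxA : ContDiff ℝ (⊤:ℕ∞) (px A) := px_contDiff hA
  have hpyA : ContDiff ℝ (⊤:ℕ∞) (py A) := py_contDiff hA
  have hpxxA : ContDiff ℝ (⊤:ℕ∞) (px (px A)) := px_contDiff hpxA
  have hf : ContDiff ℝ (⊤:ℕ∞) f := by rw [hfdef]; exact contDiff_mul' hpxA hW
  have hpxW : ∀ q, px W q = -(W q * px A q * W q) := by
    intro q
    have h0 : (fun q' => A q' * W q') = fun _ => (1 : M) := funext hAW
    have h1 : px (fun q' => A q' * W q') q = 0 := by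
      rw [h0]; unfold px; rw [fderiv_fun_const]; simp
    have h2 := px_mul hA hW q
    rw [h1] at h2
    have h3 : A q * px W q = -(px A q * W q) := eq_neg_of_add_eq_zero_right h2.symm
    calc px W q = (W q * A q) * px W q := by rw [hWA q, one_mul]
      _ = W q * (A q * px W q) := by rw [mul_assoc]
      _ = W q * -(px A q * W q) := by rw [h3]
      _ = -(W q * px A q * W q) := by rw [mul_neg, mul_assoc]
  have hpyW : ∀ q, py W q = -(W q * py A q * W q) := by
    intro q
    have h0 : (fun q' => A q' * W q') = fun _ => (1 : M) := funext hAW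
    have h1 : py (fun q' => A q' * W q') q = 0 := by
      rw [h0]; unfold py; rw [fderiv_fun_const]; simp
    have h2 := py_mul hA hW q
    rw [h1] at h2
    have h3 : A q * py W q = -(py A q * W q) := eq_neg_of_add_eq_zero_right h2.symm
    calc py W q = (W q * A q) * py W q := by rw [hWA q, one_mul]
      _ = W q * (A q * py W q) := by rw [mul_assoc]
      _ = W q * -(py A q * W q) := by rw [h3]
      _ = -(W q * py A q * W q) := by rw [mul_neg, mul_assoc]
  have hpxf : ∀ q, px f q = px (px A) q * W q - f q * f q := by
    intro q
    rw [hfdef]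
    rw [px_mul hpxA hW q, hpxW q]
    noncomm_ring
  have h2 : px (px f) p = px (px (px A)) p * W p + px (px A) p * (-(W p * px A p * W p))
      - ((px (px A) p * W p - f p * f p) * f p + f p * (px (px A) p * W p - f p * f p)) := by
    rw [show px f = fun q => px (px A) q * W q - f q * f q from funext hpxf]
    have s1 := px_sub (contDiff_mul' hpxxA hW) (contDiff_mul' hf hf) p
    rw [s1, px_mul hpxxA hW p, px_mul hf hf p, hpxW p, hpxf p]
  have h3 : py f p = py (px A) p * W p + px A p * py W p := by
    rw [hfdef]; exact py_mul hpxA hW p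
  have hkey : α • py (px A) p = px (px (px A)) p := by
    rw [← px_py hA p, ← px_smul hpyA α p]
    rw [show (fun q => α • py A q) = px (px A) from funext hheat']
  have h6 : α • py f p = px (px (px A)) p * W p - px A p * (W p * px (px A) p * W p) := by
    rw [h3, hpyW p, smul_add]
    rw [show α • (py (px A) p * W p) = px (px (px A)) p * W p from by
      rw [smul_mul_left', hkey]]
    rw [show α • (px A p * -(W p * py A p * W p)) = -(px A p * (W p * px (px A) p * W p)) from by
      rw [mul_neg, smul_neg, smul_mul_right', smul_sandwich, hheat' p]]
    exact (sub_eq_add_neg _ _).symm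
  have hF : f p = px A p * W p := by rw [hfdef]
  rw [h6, h2, hpxf p, hF, two_smul ℝ]
  noncomm_ring

end burgers

/-- Matrix Cole-Hopf transformation.  If the smooth, invertible-matrix-valued
`Φ(x,y)` satisfies the heat equation `α Φ_y = Φ_xx` (`α ≠ 0`), then `φ := Φ_x Φ⁻¹`
satisfies the matrix Burgers equation `α φ_y - φ_xx - 2 φ_x φ = 0`. -/
theorem stmt_8 {m : ℕ} (α : ℝ) (hα : α ≠ 0)
    (Φ : ℝ → ℝ → Matrix (Fin m) (Fin m) ℝ)
    (hΦ : ContDiff ℝ (⊤ : ℕ∞) fun p : ℝ × ℝ => Φ p.1 p.2)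
    (hinv : ∀ x y, IsUnit (Φ x y))
    (hheat : ∀ x y, α • pdY Φ x y = pdX (pdX Φ) x y)
    (φ : ℝ → ℝ → Matrix (Fin m) (Fin m) ℝ)
    (hφ : ∀ x y, φ x y = pdX Φ x y * (Φ x y)⁻¹) :
    ∀ x y, α • pdY φ x y - pdX (pdX φ) x y - (2 : ℝ) • (pdX φ x y * φ x y) = 0 := by
  intro x y
  have hA : ContDiff ℝ (⊤:ℕ∞) fun p : ℝ × ℝ => Φ p.1 p.2 :=
    hΦ.of_le le_rfl
  have hU : ∀ q : ℝ × ℝ, IsUnit ((fun p : ℝ × ℝ => Φ p.1 p.2) q) := fun q => hinv q.1 q.2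
  have hheat' : ∀ q : ℝ × ℝ, α • py (fun p : ℝ × ℝ => Φ p.1 p.2) q
      = px (px (fun p : ℝ × ℝ => Φ p.1 p.2)) q := by
    intro q
    have h2 : pdY Φ q.1 q.2 = py (fun p : ℝ × ℝ => Φ p.1 p.2) q := pdY_eq hA q.1 q.2
    have h3 : pdX (pdX Φ) q.1 q.2 = px (px (fun p : ℝ × ℝ => Φ p.1 p.2)) q := by
      have hx : (fun s => pdX Φ s q.2) = fun s => px (fun p : ℝ × ℝ => Φ p.1 p.2) (s, q.2) :=
        funext fun s => pdX_eq hA s q.2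
      show deriv (fun s => pdX Φ s q.2) q.1 = _
      rw [hx]
      exact (hasDerivAt_fst (px_contDiff hA) q.1 q.2).deriv
    rw [← h2, ← h3]
    exact hheat q.1 q.2
  have hf : ContDiff ℝ (⊤:ℕ∞)
      fun q : ℝ × ℝ => px (fun p : ℝ × ℝ => Φ p.1 p.2) q * (Φ q.1 q.2)⁻¹ :=
    contDiff_mul' (px_contDiff hA) (contDiff_inv' hA hU)
  have key := burgers_aux α (fun p : ℝ × ℝ => Φ p.1 p.2)
    (fun q : ℝ × ℝ => (Φ q.1 q.2)⁻¹)
    (fun q : ℝ × ℝ => px (fun p : ℝ × ℝ => Φ p.1 p.2) q * (Φ q.1 q.2)⁻¹)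
    hA hU hheat' rfl rfl (x, y)
  have e2 : ∀ a b, pdX φ a b
      = px (fun q : ℝ × ℝ => px (fun p : ℝ × ℝ => Φ p.1 p.2) q * (Φ q.1 q.2)⁻¹) (a, b) := by
    intro a b
    have h1 : (fun s => φ s b) = fun s => px (fun p : ℝ × ℝ => Φ p.1 p.2) (s, b) * (Φ s b)⁻¹ := by
      funext s; rw [hφ s b, pdX_eq hA s b]
    show deriv (fun s => φ s b) a = _
    rw [h1]
    exact (hasDerivAt_fst hf a b).deriv
  have e1 : pdY φ x y
      = py (fun q : ℝ × ℝ => px (fun p : ℝ × ℝ => Φ p.1 p.2) q * (Φ q.1 q.2)⁻¹) (x, y) := by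
    have h1 : (fun t => φ x t) = fun t => px (fun p : ℝ × ℝ => Φ p.1 p.2) (x, t) * (Φ x t)⁻¹ := by
      funext t; rw [hφ x t, pdX_eq hA x t]
    show deriv (fun t => φ x t) y = _
    rw [h1]
    exact (hasDerivAt_snd hf x y).deriv
  have e3 : pdX (pdX φ) x y
      = px (px (fun q : ℝ × ℝ => px (fun p : ℝ × ℝ => Φ p.1 p.2) q * (Φ q.1 q.2)⁻¹)) (x, y) := by
    have h1 : (fun s => pdX φ s y)
        = fun s => px (fun q : ℝ × ℝ => px (fun p : ℝ × ℝ => Φ p.1 p.2) q * (Φ q.1 q.2)⁻¹) (s, y) :=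
      funext fun s => e2 s y
    show deriv (fun s => pdX φ s y) x = _
    rw [h1]
    exact (hasDerivAt_fst (px_contDiff hf) x y).deriv
  have e0 : φ x y
      = (fun q : ℝ × ℝ => px (fun p : ℝ × ℝ => Φ p.1 p.2) q * (Φ q.1 q.2)⁻¹) (x, y) := by
    rw [hφ x y, pdX_eq hA x y]
  rw [e1, e3, e2 x y, e0]
  exact key
end

section
/- Let q, u, v be smooth matrix-valued functions of (x,y,t) (q of size m₁×m₂, u of size m₁×m₁, v of size m₂×m₂) satisfying the system i·q_t + u_y·q - q_y·v = 0, q_x = -q·v, u_x = ∓q·q†, v_x = ∓q†·q, together with i·u_t + u_y·u ∓ q_y·q† = 0 and i·v_t - v_y·v ± q_y†·q = 0 and q·v = (u + c₁)·q with c₁ constant anti-Hermitian and c₁,y·q + q·c₂,y = 0. Then (q,u,v) satisfies the matrix (2+1)-dimensional NLS system: -i·q_t = q_{xy} + q·v_y + u_y·q, u_x = ∓q·q†, v_x = ∓q†·q. -/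
open Matrix

attribute [local instance] Matrix.normedAddCommGroup Matrix.normedSpace

/-- Partial derivative in `x` of a function of `(x,y,t)`. -/
noncomputable def pdx {E : Type*} [NormedAddCommGroup E] [NormedSpace ℝ E]
    (f : ℝ → ℝ → ℝ → E) : ℝ → ℝ → ℝ → E := fun x y t => deriv (fun s => f s y t) x

/-- Partial derivative in `y` of a function of `(x,y,t)`. -/
noncomputable def pdy {E : Type*} [NormedAddCommGroup E] [NormedSpace ℝ E]
    (f : ℝ → ℝ → ℝ → E) : ℝ → ℝ → ℝ → E := fun x y t => deriv (fun s => f x s t) y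

/-- Partial derivative in `t` of a function of `(x,y,t)`. -/
noncomputable def pdt {E : Type*} [NormedAddCommGroup E] [NormedSpace ℝ E]
    (f : ℝ → ℝ → ℝ → E) : ℝ → ℝ → ℝ → E := fun x y t => deriv (fun s => f x y s) t

section Aux

variable {E : Type*} [NormedAddCommGroup E] [NormedSpace ℝ E]

lemma curveX (y t : ℝ) (x : ℝ) :
    HasDerivAt (fun s : ℝ => ((s, y, t) : ℝ × ℝ × ℝ)) (1, 0, 0) x :=
  HasDerivAt.prodMk (hasDerivAt_id x) (HasDerivAt.prodMk (hasDerivAt_const x y) (hasDerivAt_const x t))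

lemma curveY (x t : ℝ) (y : ℝ) :
    HasDerivAt (fun s : ℝ => ((x, s, t) : ℝ × ℝ × ℝ)) (0, 1, 0) y :=
  HasDerivAt.prodMk (hasDerivAt_const y x) (HasDerivAt.prodMk (hasDerivAt_id y) (hasDerivAt_const y t))

lemma sliceY_hasDerivAt (f : ℝ → ℝ → ℝ → E)
    (hf : ContDiff ℝ (⊤ : ℕ∞) fun p : ℝ × ℝ × ℝ => f p.1 p.2.1 p.2.2) (x y t : ℝ) :
    HasDerivAt (fun s => f x s t) (pdy f x y t) y := by
  have hdF : Differentiable ℝ (fun p : ℝ × ℝ × ℝ => f p.1 p.2.1 p.2.2) :=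
    hf.differentiable (by simp)
  have : DifferentiableAt ℝ (fun s => f x s t) y := by
    have := hdF.comp ((differentiable_const x).prodMk
      (differentiable_id.prodMk (differentiable_const t)))
    exact this.differentiableAt
  exact this.hasDerivAt

lemma clairaut (f : ℝ → ℝ → ℝ → E)
    (hf : ContDiff ℝ (⊤ : ℕ∞) fun p : ℝ × ℝ × ℝ => f p.1 p.2.1 p.2.2) (x y t : ℝ) :
    pdx (pdy f) x y t = pdy (pdx f) x y t := by
  set F : ℝ × ℝ × ℝ → E := fun p => f p.1 p.2.1 p.2.2 with hF
  have hdF : Differentiable ℝ F := hf.differentiable (by simp)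
  have hf' : ContDiff ℝ (⊤ : ℕ∞) (fderiv ℝ F) := hf.fderiv_right ((by simp))
  have hdf' : Differentiable ℝ (fderiv ℝ F) := hf'.differentiable (by simp)
  set e1 : ℝ × ℝ × ℝ := (1, 0, 0)
  set e2 : ℝ × ℝ × ℝ := (0, 1, 0)
  -- first partials as fderiv applications
  have hpy : ∀ x y t : ℝ, pdy f x y t = fderiv ℝ F (x, y, t) e2 := by
    intro x y t
    have : HasDerivAt (fun s => F (x, s, t)) (fderiv ℝ F (x, y, t) e2) y :=
      ((hdF (x, y, t)).hasFDerivAt.comp_hasDerivAt y (curveY x t y) :)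
    exact this.deriv
  have hpx : ∀ x y t : ℝ, pdx f x y t = fderiv ℝ F (x, y, t) e1 := by
    intro x y t
    have : HasDerivAt (fun s => F (s, y, t)) (fderiv ℝ F (x, y, t) e1) x :=
      ((hdF (x, y, t)).hasFDerivAt.comp_hasDerivAt x (curveX y t x) :)
    exact this.deriv
  have key : ∀ (w : ℝ × ℝ × ℝ) (p : ℝ × ℝ × ℝ),
      HasFDerivAt (fun p => fderiv ℝ F p w)
        ((ContinuousLinearMap.apply ℝ E w).comp (fderiv ℝ (fderiv ℝ F) p)) p := by
    intro w p
    exact (ContinuousLinearMap.apply ℝ E w).hasFDerivAt.comp p (hdf' p).hasFDerivAt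
  have hxy : pdx (pdy f) x y t = fderiv ℝ (fderiv ℝ F) (x, y, t) e1 e2 := by
    have h1 : (fun s => pdy f s y t) = fun s => fderiv ℝ F (s, y, t) e2 :=
      funext fun s => hpy s y t
    have h2 : HasDerivAt (fun s => fderiv ℝ F (s, y, t) e2)
        (fderiv ℝ (fderiv ℝ F) (x, y, t) e1 e2) x :=
      ((key e2 (x, y, t)).comp_hasDerivAt x (curveX y t x) :)
    show deriv (fun s => pdy f s y t) x = _
    rw [h1]; exact h2.deriv
  have hyx : pdy (pdx f) x y t = fderiv ℝ (fderiv ℝ F) (x, y, t) e2 e1 := by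
    have h1 : (fun s => pdx f x s t) = fun s => fderiv ℝ F (x, s, t) e1 :=
      funext fun s => hpx x s t
    have h2 : HasDerivAt (fun s => fderiv ℝ F (x, s, t) e1)
        (fderiv ℝ (fderiv ℝ F) (x, y, t) e2 e1) y :=
      ((key e1 (x, y, t)).comp_hasDerivAt y (curveY x t y) :)
    show deriv (fun s => pdx f x s t) y = _
    rw [h1]; exact h2.deriv
  rw [hxy, hyx]
  exact second_derivative_symmetric (fun p => (hdF p).hasFDerivAt)
    ((hdf' (x, y, t)).hasFDerivAt) e1 e2

noncomputable def mulCLM (a b c : ℕ) :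
    Matrix (Fin a) (Fin b) ℂ →L[ℝ] Matrix (Fin b) (Fin c) ℂ →L[ℝ] Matrix (Fin a) (Fin c) ℂ :=
  LinearMap.toContinuousLinearMap
  { toFun := fun A => LinearMap.toContinuousLinearMap
      { toFun := fun B => A * B
        map_add' := fun B C => Matrix.mul_add A B C
        map_smul' := fun r B => by
          ext i j; simp [Matrix.mul_apply, Finset.smul_sum, mul_smul_comm, mul_left_comm] }
    map_add' := fun A A' => by
      ext B i j; simp [Matrix.add_mul]
    map_smul' := fun r A => by
      ext B i j; simp [Matrix.mul_apply, Finset.smul_sum, smul_mul_assoc] }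

lemma hasDerivAt_matmul {a b c : ℕ} {f : ℝ → Matrix (Fin a) (Fin b) ℂ}
    {g : ℝ → Matrix (Fin b) (Fin c) ℂ} {f' : Matrix (Fin a) (Fin b) ℂ}
    {g' : Matrix (Fin b) (Fin c) ℂ} {x : ℝ}
    (hf : HasDerivAt f f' x) (hg : HasDerivAt g g' x) :
    HasDerivAt (fun s => f s * g s) (f' * g x + f x * g') x := by
  letI : NormedAddCommGroup (Matrix (Fin b) (Fin c) ℂ →L[ℝ] Matrix (Fin a) (Fin c) ℂ) :=
    ContinuousLinearMap.toNormedAddCommGroup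
  letI : NormedSpace ℝ (Matrix (Fin b) (Fin c) ℂ →L[ℝ] Matrix (Fin a) (Fin c) ℂ) :=
    ContinuousLinearMap.toNormedSpace
  have h1 : HasDerivAt (fun s => mulCLM a b c (f s)) (mulCLM a b c f') x :=
    (((mulCLM a b c).hasFDerivAt (x := f x)).comp_hasDerivAt x hf :)
  exact h1.clm_apply hg

end Aux

/-- Solutions of the `Riemann system' associated with the
(2+1)-dimensional matrix NLS system solve the matrix (2+1)-dimensional NLS system.
Here `ε = 1` is the defocusing (upper sign) case and `ε = -1` the focusing case. -/
theorem stmt_11 {m₁ m₂ : ℕ} (ε : ℂ) (hε : ε = 1 ∨ ε = -1)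
    (q : ℝ → ℝ → ℝ → Matrix (Fin m₁) (Fin m₂) ℂ)
    (u : ℝ → ℝ → ℝ → Matrix (Fin m₁) (Fin m₁) ℂ)
    (v : ℝ → ℝ → ℝ → Matrix (Fin m₂) (Fin m₂) ℂ)
    (c₁ : ℝ → ℝ → Matrix (Fin m₁) (Fin m₁) ℂ)
    (c₂ : ℝ → ℝ → Matrix (Fin m₂) (Fin m₂) ℂ)
    (hq : ContDiff ℝ (⊤ : ℕ∞) fun p : ℝ × ℝ × ℝ => q p.1 p.2.1 p.2.2)
    (hu : ContDiff ℝ (⊤ : ℕ∞) fun p : ℝ × ℝ × ℝ => u p.1 p.2.1 p.2.2)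
    (hv : ContDiff ℝ (⊤ : ℕ∞) fun p : ℝ × ℝ × ℝ => v p.1 p.2.1 p.2.2)
    (hc₁ : ContDiff ℝ (⊤ : ℕ∞) fun p : ℝ × ℝ => c₁ p.1 p.2)
    (hc₂ : ContDiff ℝ (⊤ : ℕ∞) fun p : ℝ × ℝ => c₂ p.1 p.2)
    (hc₁ah : ∀ y t, (c₁ y t)ᴴ = -c₁ y t)
    -- the Riemann system
    (h1 : ∀ x y t, Complex.I • pdt q x y t + pdy u x y t * q x y t
      - pdy q x y t * v x y t = 0)
    (h2 : ∀ x y t, pdx q x y t = -(q x y t * v x y t))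
    (h3 : ∀ x y t, pdx u x y t = -ε • (q x y t * (q x y t)ᴴ))
    (h4 : ∀ x y t, pdx v x y t = -ε • ((q x y t)ᴴ * q x y t))
    (h5 : ∀ x y t, Complex.I • pdt u x y t + pdy u x y t * u x y t
      - ε • (pdy q x y t * (q x y t)ᴴ) = 0)
    (h6 : ∀ x y t, Complex.I • pdt v x y t - pdy v x y t * v x y t
      + ε • ((pdy q x y t)ᴴ * q x y t) = 0)
    (h7 : ∀ x y t, q x y t * v x y t = (u x y t + c₁ y t) * q x y t)
    (h8 : ∀ x y t, deriv (fun s => c₁ s t) y * q x y t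
      + q x y t * deriv (fun s => c₂ s t) y = 0) :
    ∀ x y t,
      (-(Complex.I • pdt q x y t)
        = pdx (pdy q) x y t + q x y t * pdy v x y t + pdy u x y t * q x y t) ∧
      pdx u x y t = -ε • (q x y t * (q x y t)ᴴ) ∧
      pdx v x y t = -ε • ((q x y t)ᴴ * q x y t) := by
  intro x y t
  refine ⟨?_, h3 x y t, h4 x y t⟩
  have hqy := sliceY_hasDerivAt q hq x y t
  have hvy := sliceY_hasDerivAt v hv x y t
  have hclair := clairaut q hq x y t
  have hprod : HasDerivAt (fun s => -(q x s t * v x s t))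
      (-(pdy q x y t * v x y t + q x y t * pdy v x y t)) y :=
    (hasDerivAt_matmul hqy hvy).neg
  have hyx : pdy (pdx q) x y t = -(pdy q x y t * v x y t + q x y t * pdy v x y t) := by
    have heq : (fun s => pdx q x s t) = fun s => -(q x s t * v x s t) :=
      funext fun s => h2 x s t
    show deriv (fun s => pdx q x s t) y = _
    rw [heq]; exact hprod.deriv
  have h1' : Complex.I • pdt q x y t = pdy q x y t * v x y t - pdy u x y t * q x y t := by
    rw [← sub_eq_zero, ← h1 x y t]; abel
  rw [hclair, hyx, h1']
  abel
end

section
/- Let J be a constant m×m matrix with J² = I, J ≠ I, and let Φ : ℝ² → GL(m,ℂ) be smooth and satisfy Φ_y - J·Φ_x = 0. Then φ := J·Φ_x·Φ⁻¹ satisfies φ_y = J·φ_x + [J,φ]·J·φ, where [J,φ] = Jφ - φJ. -/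
attribute [local instance] Matrix.normedAddCommGroup Matrix.normedSpace

namespace Stmt15Aux

variable {m : ℕ}

abbrev M (m : ℕ) := Matrix (Fin m) (Fin m) ℂ

noncomputable def mulCLM (m : ℕ) : M m →L[ℝ] M m →L[ℝ] M m :=
  LinearMap.toContinuousLinearMap
    ((LinearMap.toContinuousLinearMap.toLinearMap).comp (LinearMap.mul ℝ (M m)))

@[simp] lemma mulCLM_apply (A B : M m) : mulCLM m A B = A * B := rfl

lemma isBBM_mul : IsBoundedBilinearMap ℝ (fun p : M m × M m => p.1 * p.2) := by
  have := (mulCLM m).isBoundedBilinearMap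
  exact this

lemma mmul {u v : ℝ → M m} {u' v' : M m} {x : ℝ}
    (hu : HasDerivAt u u' x) (hv : HasDerivAt v v' x) :
    HasDerivAt (fun t => u t * v t) (u x * v' + u' * v x) x := by
  have h := (isBBM_mul (m := m)).hasFDerivAt (u x, v x)
  have h2 := h.comp_hasDerivAt x (hu.prodMk hv)
  exact h2

noncomputable instance instNACGclm (m : ℕ) : NormedAddCommGroup (ℝ × ℝ →L[ℝ] M m) :=
  ContinuousLinearMap.toNormedAddCommGroup

noncomputable instance instNSclm (m : ℕ) : NormedSpace ℝ (ℝ × ℝ →L[ℝ] M m) :=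
  ContinuousLinearMap.toNormedSpace

lemma contDiff_entry {F : ℝ × ℝ → M m} (hF : ContDiff ℝ (⊤ : ℕ∞) F) (i j : Fin m) :
    ContDiff ℝ (⊤ : ℕ∞) (fun p => F p i j) := contDiff_pi.mp (contDiff_pi.mp hF i) j

lemma contDiff_det {F : ℝ × ℝ → M m} (hF : ContDiff ℝ (⊤ : ℕ∞) F) :
    ContDiff ℝ (⊤ : ℕ∞) (fun p => (F p).det) := by
  simp only [Matrix.det_apply']
  apply ContDiff.sum
  intro σ _
  apply ContDiff.mul contDiff_const
  have := contDiff_prod (𝕜 := ℝ) (f := fun (i : Fin m) (p : ℝ × ℝ) => F p (σ i) i)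
    (t := Finset.univ) (fun i _ => contDiff_entry hF (σ i) i)
  simpa using this

lemma contDiff_adjugate {F : ℝ × ℝ → M m} (hF : ContDiff ℝ (⊤ : ℕ∞) F) :
    ContDiff ℝ (⊤ : ℕ∞) (fun p => (F p).adjugate) := by
  apply contDiff_pi.mpr; intro i; apply contDiff_pi.mpr; intro j
  have h : (fun p => (F p).adjugate i j)
      = fun p => ((F p).updateRow j (Pi.single i 1)).det := by
    funext p; rw [Matrix.adjugate_apply]
  rw [h]
  apply contDiff_det
  apply contDiff_pi.mpr; intro a; apply contDiff_pi.mpr; intro b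
  simp only [Matrix.updateRow_apply]
  by_cases h : a = j <;> simp [h, contDiff_const, contDiff_entry hF]

lemma contDiff_inv_mat {F : ℝ × ℝ → M m} (hF : ContDiff ℝ (⊤ : ℕ∞) F)
    (h : ∀ p, IsUnit (F p)) : ContDiff ℝ (⊤ : ℕ∞) (fun p => (F p)⁻¹) := by
  have hd : ∀ p, (F p).det ≠ 0 := fun p =>
    (Matrix.isUnit_iff_isUnit_det _ |>.mp (h p)).ne_zero
  apply contDiff_pi.mpr; intro i; apply contDiff_pi.mpr; intro j
  have h' : (fun p => (F p)⁻¹ i j) = fun p => ((F p).det)⁻¹ * (F p).adjugate i j := by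
    funext p; rw [Matrix.inv_def, Ring.inverse_eq_inv']; rfl
  rw [h']
  exact ((contDiff_det hF).inv hd).mul (contDiff_entry (contDiff_adjugate hF) i j)

lemma sliceX {G : ℝ × ℝ → M m} {x y : ℝ} (hG : DifferentiableAt ℝ G (x, y)) :
    HasDerivAt (fun s => G (s, y)) (fderiv ℝ G (x, y) (1, 0)) x := by
  have h : HasDerivAt (fun s : ℝ => (s, y)) ((1 : ℝ), (0 : ℝ)) x :=
    (hasDerivAt_id x).prodMk (hasDerivAt_const x y)
  exact hG.hasFDerivAt.comp_hasDerivAt x h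

lemma sliceY {G : ℝ × ℝ → M m} {x y : ℝ} (hG : DifferentiableAt ℝ G (x, y)) :
    HasDerivAt (fun t => G (x, t)) (fderiv ℝ G (x, y) (0, 1)) y := by
  have h : HasDerivAt (fun t : ℝ => (x, t)) ((0 : ℝ), (1 : ℝ)) y :=
    (hasDerivAt_const y x).prodMk (hasDerivAt_id y)
  exact hG.hasFDerivAt.comp_hasDerivAt y h

lemma alg (J A P X : M m) (hJ2 : J * J = 1) :
    J * A * (-(P * (J * A) * P)) + J * (J * X) * P
      = J * (J * A * (-(P * A * P)) + J * X * P)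
        + (J * (J * A * P) - (J * A * P) * J) * J * (J * A * P) := by
  have hJJ : ∀ B : M m, J * (J * B) = B := fun B => by rw [← mul_assoc, hJ2, one_mul]
  simp only [mul_add, add_mul, mul_sub, sub_mul, mul_neg, neg_mul, mul_one, one_mul, mul_assoc,
    hJJ]
  abel

end Stmt15Aux

open Stmt15Aux in
/-- Cole-Hopf transformation for the `Riemann equation' associated with the
Davey-Stewartson system.  If `J² = I`, `J ≠ I`, and the smooth invertible `Φ` satisfies
`Φ_y - J Φ_x = 0`, then `φ := J Φ_x Φ⁻¹` satisfies `φ_y = J φ_x + [J,φ] J φ`. -/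
theorem stmt_15 {m : ℕ} (J : Matrix (Fin m) (Fin m) ℂ)
    (hJ2 : J * J = 1) (hJ : J ≠ 1)
    (Φ : ℝ → ℝ → Matrix (Fin m) (Fin m) ℂ)
    (hΦ : ContDiff ℝ (⊤ : ℕ∞) fun p : ℝ × ℝ => Φ p.1 p.2)
    (hinv : ∀ x y, IsUnit (Φ x y))
    (hlin : ∀ x y, pdY Φ x y - J * pdX Φ x y = 0)
    (φ : ℝ → ℝ → Matrix (Fin m) (Fin m) ℂ)
    (hφ : ∀ x y, φ x y = J * pdX Φ x y * (Φ x y)⁻¹) :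
    ∀ x y, pdY φ x y
      = J * pdX φ x y + (J * φ x y - φ x y * J) * J * φ x y := by
  have hF : ContDiff ℝ (⊤ : ℕ∞) fun p : ℝ × ℝ => Φ p.1 p.2 := hΦ
  set F : ℝ × ℝ → M m := fun p => Φ p.1 p.2 with hFdef
  have hFd : Differentiable ℝ F := hF.differentiable (by simp)
  have hΨ : ContDiff ℝ (⊤ : ℕ∞) fun p : ℝ × ℝ => (F p)⁻¹ :=
    contDiff_inv_mat hF fun p => hinv p.1 p.2
  set Ψ : ℝ × ℝ → M m := fun p => (F p)⁻¹ with hΨdef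
  have hΨd : Differentiable ℝ Ψ := hΨ.differentiable (by simp)
  have hfd : ContDiff ℝ (⊤ : ℕ∞) (fderiv ℝ F) := hF.fderiv_right (by simp)
  set Fx : ℝ × ℝ → M m := fun p => fderiv ℝ F p (1, 0) with hFxdef
  set Fy : ℝ × ℝ → M m := fun p => fderiv ℝ F p (0, 1) with hFydef
  have hFx : ContDiff ℝ (⊤ : ℕ∞) Fx :=
    (ContinuousLinearMap.apply ℝ (M m) ((1, 0) : ℝ × ℝ)).contDiff.comp hfd
  have hFy : ContDiff ℝ (⊤ : ℕ∞) Fy :=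
    (ContinuousLinearMap.apply ℝ (M m) ((0, 1) : ℝ × ℝ)).contDiff.comp hfd
  have hFxd : Differentiable ℝ Fx := hFx.differentiable (by simp)
  have hFyd : Differentiable ℝ Fy := hFy.differentiable (by simp)
  have pdX_eq : ∀ a b : ℝ, pdX Φ a b = Fx (a, b) := fun a b =>
    (sliceX (hFd (a, b))).deriv
  have pdY_eq : ∀ a b : ℝ, pdY Φ a b = Fy (a, b) := fun a b =>
    (sliceY (hFd (a, b))).deriv
  have hlin' : ∀ p : ℝ × ℝ, Fy p = J * Fx p := by
    intro p
    have h := hlin p.1 p.2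
    rw [pdX_eq, pdY_eq, sub_eq_zero] at h
    exact h
  have hφ' : ∀ a b : ℝ, φ a b = J * Fx (a, b) * Ψ (a, b) := by
    intro a b; rw [hφ, pdX_eq]
  intro x y
  set A : M m := Fx (x, y) with hA
  set P : M m := Ψ (x, y) with hP
  have hFP : F (x, y) * P = 1 :=
    Matrix.mul_nonsing_inv _ ((Matrix.isUnit_iff_isUnit_det _).mp (hinv x y))
  -- derivative of Ψ along x
  have hΨx : HasDerivAt (fun s => Ψ (s, y)) (-(P * A * P)) x := by
    have h1 : HasDerivAt (fun s => Ψ (s, y)) (fderiv ℝ Ψ (x, y) (1, 0)) x := sliceX (hΨd _)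
    have h2 : HasDerivAt (fun s => F (s, y)) A x := sliceX (hFd _)
    have h3 := mmul h1 h2
    have h4 : (fun s => Ψ (s, y) * F (s, y)) = fun _ => (1 : M m) := by
      funext s
      exact Matrix.nonsing_inv_mul _ ((Matrix.isUnit_iff_isUnit_det _).mp (hinv s y))
    rw [h4] at h3
    have h5 := h3.unique (hasDerivAt_const x 1)
    have h6 : (P * A + fderiv ℝ Ψ (x, y) (1, 0) * F (x, y)) * P = 0 * P := by rw [h5]
    rw [add_mul, mul_assoc (fderiv ℝ Ψ (x, y) (1, 0)), hFP, mul_one, zero_mul] at h6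
    have h7 : fderiv ℝ Ψ (x, y) (1, 0) = -(P * A * P) := by
      have := eq_neg_of_add_eq_zero_right h6
      simpa [mul_assoc] using this
    rw [← h7]; exact h1
  -- derivative of Ψ along y
  have hΨy : HasDerivAt (fun t => Ψ (x, t)) (-(P * (J * A) * P)) y := by
    have h1 : HasDerivAt (fun t => Ψ (x, t)) (fderiv ℝ Ψ (x, y) (0, 1)) y := sliceY (hΨd _)
    have h2 : HasDerivAt (fun t => F (x, t)) (J * A) y := by
      have := sliceY (hFd ((x, y) : ℝ × ℝ))
      have hv : Fy (x, y) = J * A := hlin' (x, y)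
      rw [show fderiv ℝ F (x, y) (0, 1) = Fy (x, y) from rfl, hv] at this
      exact this
    have h3 := mmul h1 h2
    have h4 : (fun t => Ψ (x, t) * F (x, t)) = fun _ => (1 : M m) := by
      funext t
      exact Matrix.nonsing_inv_mul _ ((Matrix.isUnit_iff_isUnit_det _).mp (hinv x t))
    rw [h4] at h3
    have h5 := h3.unique (hasDerivAt_const y 1)
    have h6 : (P * (J * A) + fderiv ℝ Ψ (x, y) (0, 1) * F (x, y)) * P = 0 * P := by
      rw [h5]
    rw [add_mul, mul_assoc (fderiv ℝ Ψ (x, y) (0, 1)), hFP, mul_one, zero_mul] at h6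
    have h7 : fderiv ℝ Ψ (x, y) (0, 1) = -(P * (J * A) * P) := by
      have := eq_neg_of_add_eq_zero_right h6
      simpa [mul_assoc] using this
    rw [← h7]; exact h1
  -- second derivative symmetry
  set X : M m := fderiv ℝ Fx (x, y) (1, 0) with hX
  have hD2 : HasFDerivAt (fderiv ℝ F) (fderiv ℝ (fderiv ℝ F) (x, y)) (x, y) :=
    ((hfd.differentiable (by simp)) (x, y)).hasFDerivAt
  have hFxD : HasFDerivAt Fx
      ((ContinuousLinearMap.apply ℝ (M m) ((1, 0) : ℝ × ℝ)).comp
        (fderiv ℝ (fderiv ℝ F) (x, y))) (x, y) :=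
    (ContinuousLinearMap.apply ℝ (M m) ((1, 0) : ℝ × ℝ)).hasFDerivAt.comp (x, y) hD2
  have hFyD : HasFDerivAt Fy
      ((ContinuousLinearMap.apply ℝ (M m) ((0, 1) : ℝ × ℝ)).comp
        (fderiv ℝ (fderiv ℝ F) (x, y))) (x, y) :=
    (ContinuousLinearMap.apply ℝ (M m) ((0, 1) : ℝ × ℝ)).hasFDerivAt.comp (x, y) hD2
  have hsymm : IsSymmSndFDerivAt ℝ F (x, y) := (hF.contDiffAt).isSymmSndFDerivAt (by rw [minSmoothness_of_isRCLikeNormedField]; exact WithTop.coe_le_coe.mpr le_top)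
  have hswap : fderiv ℝ Fx (x, y) (0, 1) = fderiv ℝ Fy (x, y) (1, 0) := by
    refine (DFunLike.congr_fun hFxD.fderiv (0, 1)).trans
      ((?_ : _ = _).trans (DFunLike.congr_fun hFyD.fderiv (1, 0)).symm)
    exact hsymm.eq (0, 1) (1, 0)
  have hXy : fderiv ℝ Fy (x, y) (1, 0) = J * X := by
    have h1 : HasDerivAt (fun s => Fy (s, y)) (fderiv ℝ Fy (x, y) (1, 0)) x :=
      sliceX (hFyd _)
    have h2 : HasDerivAt (fun s => Fy (s, y)) (J * X) x := by
      have h3 := mmul (hasDerivAt_const x J) (sliceX (hFxd ((x, y) : ℝ × ℝ)))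
      have h4 : (fun s => Fy (s, y)) = fun s => J * Fx (s, y) :=
        funext fun s => hlin' (s, y)
      rw [h4]
      simpa using h3
    exact h1.unique h2
  have hFx01 : fderiv ℝ Fx (x, y) (0, 1) = J * X := by rw [hswap, hXy]
  -- compute pdX φ
  have hJFx : HasDerivAt (fun s => J * Fx (s, y)) (J * X) x := by
    simpa using mmul (hasDerivAt_const x J) (sliceX (hFxd ((x, y) : ℝ × ℝ)))
  have hpdX : pdX φ x y = J * A * (-(P * A * P)) + J * X * P := by
    have h2 := mmul hJFx hΨx
    have h3 : (fun s => φ s y) = fun s => J * Fx (s, y) * Ψ (s, y) :=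
      funext fun s => hφ' s y
    show deriv (fun s => φ s y) x = _
    rw [h3]
    exact h2.deriv
  -- compute pdY φ
  have hJFxY : HasDerivAt (fun t => J * Fx (x, t)) (J * (J * X)) y := by
    have h := mmul (hasDerivAt_const y J) (sliceY (hFxd ((x, y) : ℝ × ℝ)))
    rw [show fderiv ℝ Fx (x, y) (0, 1) = J * X from hFx01] at h
    simpa using h
  have hpdY : pdY φ x y = J * A * (-(P * (J * A) * P)) + J * (J * X) * P := by
    have h2 := mmul hJFxY hΨy
    have h3 : (fun t => φ x t) = fun t => J * Fx (x, t) * Ψ (x, t) :=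
      funext fun t => hφ' x t
    show deriv (fun t => φ x t) y = _
    rw [h3]
    exact h2.deriv
  rw [hpdX, hpdY, hφ' x y]
  exact alg J A P X hJ2
end

section
/- Let A be an associative algebra with derivations d, d̄ : A → Ω¹, extended entrywise to rectangular matrices over A. Suppose φ₀, g₀ ∈ Mat(m,m) solve the Miura equation (d̄g₀)·g₀⁻¹ = dφ₀; suppose P, Q ∈ Mat(n,n) solve d̄P - (dP)·P = 0 and d̄Q - Q·dQ = 0; suppose U ∈ Mat(m,n), V ∈ Mat(n,m) solve d̄U = (dU)·P + (dφ₀)·U and d̄V = Q·dV - V·dφ₀; and suppose X ∈ Mat(n,n) is invertible with X·P - Q·X = V·U and d̄X - (dX)·P + (dQ)·X + (dV)·U = 0, where QX is also invertible. Then φ := φ₀ + U·X⁻¹·V and g := (I + U·(Q·X)⁻¹·V)·g₀ solve the Miura equation (d̄g)·g⁻¹ = dφ, i.e., d̄g = (dφ)·g. -/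
open MulOpposite

section Defs

variable {A Ω : Type*} [Ring A] [AddCommGroup Ω] [Module A Ω] [Module Aᵐᵒᵖ Ω]
  [SMulCommClass A Aᵐᵒᵖ Ω]

/-- Product of a matrix over `A` with a matrix over the `A`-bimodule `Ω`. -/
def lmulMat {k l n : ℕ} (M : Matrix (Fin k) (Fin l) A) (W : Matrix (Fin l) (Fin n) Ω) :
    Matrix (Fin k) (Fin n) Ω :=
  fun i j => ∑ s, M i s • W s j

/-- Product of a matrix over the `A`-bimodule `Ω` with a matrix over `A`. -/
def rmulMat {k l n : ℕ} (W : Matrix (Fin k) (Fin l) Ω) (M : Matrix (Fin l) (Fin n) A) :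
    Matrix (Fin k) (Fin n) Ω :=
  fun i j => ∑ s, op (M s j) • W i s

/-- Entrywise extension of a map `d : A → Ω` to matrices. -/
def dMat (d : A → Ω) {k l : ℕ} (M : Matrix (Fin k) (Fin l) A) : Matrix (Fin k) (Fin l) Ω :=
  fun i j => d (M i j)

end Defs

/-!
With `K = (QX)⁻¹` and `G = 1 + U K V`, so that `g = G g₀`, the Sylvester equation gives
`P K = X⁻¹ (1 + V U K)`. Using it, the linear equations for `U`, `V`, `X`, `Q` combine into
`d̄(K V) = d(X⁻¹ V) G - K V dφ₀`, hence `d̄G = d(U X⁻¹ V) G + [dφ₀, G]`, and the commutator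
term is exactly what turns the Miura equation `d̄g₀ = dφ₀ g₀` into `d̄(G g₀) = dφ (G g₀)`.
-/

section BimoduleMatrices

variable {A Ω : Type*} [Ring A] [AddCommGroup Ω]

section LeftAction

variable [Module A Ω] {k l r s : ℕ}

lemma lmulMat_one (W : Matrix (Fin k) (Fin l) Ω) :
    lmulMat (1 : Matrix (Fin k) (Fin k) A) W = W := by
  funext i j
  simp [lmulMat, Matrix.one_apply, ite_smul]

lemma lmulMat_lmulMat (M : Matrix (Fin k) (Fin l) A) (N : Matrix (Fin l) (Fin r) A)
    (W : Matrix (Fin r) (Fin s) Ω) : lmulMat M (lmulMat N W) = lmulMat (M * N) W := by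
  funext i j
  simp only [lmulMat, Matrix.mul_apply, Finset.smul_sum, Finset.sum_smul, mul_smul]
  exact Finset.sum_comm

lemma lmulMat_add_left (M N : Matrix (Fin k) (Fin l) A) (W : Matrix (Fin l) (Fin r) Ω) :
    lmulMat (M + N) W = lmulMat M W + lmulMat N W := by
  funext i j
  simp [lmulMat, add_smul, Finset.sum_add_distrib]

lemma lmulMat_add_right (M : Matrix (Fin k) (Fin l) A) (W W' : Matrix (Fin l) (Fin r) Ω) :
    lmulMat M (W + W') = lmulMat M W + lmulMat M W' := by
  funext i j
  simp [lmulMat, Finset.sum_add_distrib]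

lemma lmulMat_neg_right (M : Matrix (Fin k) (Fin l) A) (W : Matrix (Fin l) (Fin r) Ω) :
    lmulMat M (-W) = -lmulMat M W := by
  funext i j
  simp [lmulMat]

lemma lmulMat_sub_right (M : Matrix (Fin k) (Fin l) A) (W W' : Matrix (Fin l) (Fin r) Ω) :
    lmulMat M (W - W') = lmulMat M W - lmulMat M W' := by
  rw [sub_eq_add_neg, lmulMat_add_right, lmulMat_neg_right, ← sub_eq_add_neg]

end LeftAction

section RightAction

variable [Module Aᵐᵒᵖ Ω] {k l r s : ℕ}

lemma rmulMat_one (W : Matrix (Fin k) (Fin l) Ω) :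
    rmulMat W (1 : Matrix (Fin l) (Fin l) A) = W := by
  funext i j
  simp [rmulMat, Matrix.one_apply, apply_ite op, ite_smul]

lemma rmulMat_rmulMat (W : Matrix (Fin k) (Fin l) Ω) (M : Matrix (Fin l) (Fin r) A)
    (N : Matrix (Fin r) (Fin s) A) : rmulMat (rmulMat W M) N = rmulMat W (M * N) := by
  funext i j
  simp only [rmulMat, Matrix.mul_apply, Finset.op_sum, op_mul, Finset.sum_smul, mul_smul,
    Finset.smul_sum]
  exact Finset.sum_comm

lemma rmulMat_add_left (W W' : Matrix (Fin k) (Fin l) Ω) (M : Matrix (Fin l) (Fin r) A) :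
    rmulMat (W + W') M = rmulMat W M + rmulMat W' M := by
  funext i j
  simp [rmulMat, Finset.sum_add_distrib]

lemma rmulMat_add_right (W : Matrix (Fin k) (Fin l) Ω) (M N : Matrix (Fin l) (Fin r) A) :
    rmulMat W (M + N) = rmulMat W M + rmulMat W N := by
  funext i j
  simp [rmulMat, add_smul, Finset.sum_add_distrib]

lemma rmulMat_neg_left (W : Matrix (Fin k) (Fin l) Ω) (M : Matrix (Fin l) (Fin r) A) :
    rmulMat (-W) M = -rmulMat W M := by
  funext i j
  simp [rmulMat]

lemma rmulMat_sub_left (W W' : Matrix (Fin k) (Fin l) Ω) (M : Matrix (Fin l) (Fin r) A) :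
    rmulMat (W - W') M = rmulMat W M - rmulMat W' M := by
  rw [sub_eq_add_neg, rmulMat_add_left, rmulMat_neg_left, ← sub_eq_add_neg]

lemma eq_rmulMat_of_rmulMat_eq {W W' : Matrix (Fin k) (Fin l) Ω}
    {M M' : Matrix (Fin l) (Fin l) A} (h : rmulMat W M' = W') (hM : M' * M = 1) :
    W = rmulMat W' M := by
  rw [← h, rmulMat_rmulMat, hM, rmulMat_one]

end RightAction

lemma lmulMat_rmulMat [Module A Ω] [Module Aᵐᵒᵖ Ω] [SMulCommClass A Aᵐᵒᵖ Ω] {k l r s : ℕ}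
    (M : Matrix (Fin k) (Fin l) A) (W : Matrix (Fin l) (Fin r) Ω)
    (N : Matrix (Fin r) (Fin s) A) : lmulMat M (rmulMat W N) = rmulMat (lmulMat M W) N := by
  funext i j
  simp only [lmulMat, rmulMat, Finset.smul_sum]
  rw [Finset.sum_comm]
  exact Finset.sum_congr rfl fun _ _ => Finset.sum_congr rfl fun _ _ => smul_comm _ _ _

structure IsBimoduleDerivation [Module A Ω] [Module Aᵐᵒᵖ Ω] (d : A → Ω) : Prop where
  map_add : ∀ a b : A, d (a + b) = d a + d b
  leibniz : ∀ a b : A, d (a * b) = op b • d a + a • d b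

namespace IsBimoduleDerivation

variable [Module A Ω] [Module Aᵐᵒᵖ Ω] {d : A → Ω} (hd : IsBimoduleDerivation d)
include hd

lemma map_zero : d 0 = 0 := by
  simpa using hd.map_add 0 0

lemma map_one : d 1 = 0 := by
  simpa using hd.leibniz 1 1

lemma map_sum {ι : Type*} (s : Finset ι) (f : ι → A) : d (∑ i ∈ s, f i) = ∑ i ∈ s, d (f i) :=
  _root_.map_sum (AddMonoidHom.mk' d hd.map_add) f s

lemma dMat_add {k l : ℕ} (M N : Matrix (Fin k) (Fin l) A) :
    dMat d (M + N) = dMat d M + dMat d N := by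
  funext i j
  exact hd.map_add _ _

lemma dMat_one {k : ℕ} : dMat d (1 : Matrix (Fin k) (Fin k) A) = 0 := by
  funext i j
  by_cases h : i = j <;> simp [dMat, Matrix.one_apply, h, hd.map_one, hd.map_zero]

lemma dMat_mul {k l r : ℕ} (M : Matrix (Fin k) (Fin l) A) (N : Matrix (Fin l) (Fin r) A) :
    dMat d (M * N) = rmulMat (dMat d M) N + lmulMat M (dMat d N) := by
  funext i j
  simp only [dMat, Matrix.mul_apply, Matrix.add_apply, rmulMat, lmulMat, hd.map_sum,
    hd.leibniz, Finset.sum_add_distrib]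

lemma dMat_inv [SMulCommClass A Aᵐᵒᵖ Ω] {k : ℕ} {M M' : Matrix (Fin k) (Fin k) A}
    (h : M * M' = 1) (h' : M' * M = 1) :
    dMat d M' = -rmulMat (lmulMat M' (dMat d M)) M' := by
  have hsum : rmulMat (dMat d M) M' + lmulMat M (dMat d M') = 0 := by
    rw [← hd.dMat_mul, h, hd.dMat_one]
  rw [← lmulMat_one (A := A) (dMat d M'), ← h', ← lmulMat_lmulMat,
    eq_neg_of_add_eq_zero_right hsum, lmulMat_neg_right, lmulMat_rmulMat]

end IsBimoduleDerivation

lemma mul_eq_of_sylvester {R : Type*} [Ring R] {X Xinv P Q K S : R} (hXr : Xinv * X = 1)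
    (hK : Q * X * K = 1) (hSyl : X * P - Q * X = S) : P * K = Xinv * (1 + S * K) := by
  have h : Xinv * (1 + S * K) = Xinv * X * P * K + Xinv * (1 - Q * X * K) := by
    rw [← hSyl]; noncomm_ring
  rw [h, hXr, hK, sub_self, mul_zero, add_zero, one_mul]

section Darboux

variable [Module A Ω] [Module Aᵐᵒᵖ Ω] [SMulCommClass A Aᵐᵒᵖ Ω] {d dbar : A → Ω}
  (hd : IsBimoduleDerivation d) (hdbar : IsBimoduleDerivation dbar) {m n : ℕ}

include hdbar in
lemma dbar_QX_inv {P Q X Xinv K : Matrix (Fin n) (Fin n) A} {U : Matrix (Fin m) (Fin n) A}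
    {V : Matrix (Fin n) (Fin m) A}
    (hQ : dMat dbar Q - lmulMat Q (dMat d Q) = 0)
    (hX : dMat dbar X - rmulMat (dMat d X) P + rmulMat (dMat d Q) X + rmulMat (dMat d V) U = 0)
    (hK : Q * X * K = 1) (hK' : K * (Q * X) = 1) (hKQ : K * Q = Xinv) :
    dMat dbar K = -rmulMat (lmulMat Xinv (rmulMat (dMat d X) P - rmulMat (dMat d V) U)) K := by
  have hQX : dMat dbar (Q * X) = lmulMat Q (rmulMat (dMat d X) P - rmulMat (dMat d V) U) := by
    rw [hdbar.dMat_mul, sub_eq_zero.mp hQ, ← lmulMat_rmulMat, ← lmulMat_add_right]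
    congr 1
    rw [← sub_eq_zero, ← hX]
    abel
  rw [hdbar.dMat_inv hK hK', hQX, lmulMat_lmulMat, hKQ]

include hd hdbar in
lemma dbar_QX_inv_mul {P Q X Xinv K : Matrix (Fin n) (Fin n) A} {U : Matrix (Fin m) (Fin n) A}
    {V : Matrix (Fin n) (Fin m) A} {φ₀ : Matrix (Fin m) (Fin m) A}
    (hV : dMat dbar V = lmulMat Q (dMat d V) - lmulMat V (dMat d φ₀))
    (hXl : X * Xinv = 1) (hXr : Xinv * X = 1) (hKQ : K * Q = Xinv)
    (hK : dMat dbar K = -rmulMat (lmulMat Xinv (rmulMat (dMat d X) P - rmulMat (dMat d V) U)) K)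
    (hPK : P * (K * V) = Xinv * V * (1 + U * (K * V))) :
    dMat dbar (K * V) =
      rmulMat (dMat d (Xinv * V)) (1 + U * (K * V)) - lmulMat (K * V) (dMat d φ₀) := by
  rw [hdbar.dMat_mul, hK, hV, hd.dMat_mul, hd.dMat_inv hXl hXr]
  simp only [lmulMat_sub_right, lmulMat_lmulMat, lmulMat_rmulMat, hKQ, rmulMat_rmulMat,
    rmulMat_sub_left, rmulMat_neg_left, rmulMat_add_left, Matrix.mul_assoc, hPK]
  simp only [Matrix.mul_add, Matrix.mul_one, rmulMat_add_right, rmulMat_one]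
  abel

include hd hdbar in
lemma dbar_one_add_mul {P : Matrix (Fin n) (Fin n) A} {U : Matrix (Fin m) (Fin n) A}
    {W Y : Matrix (Fin n) (Fin m) A} {φ₀ : Matrix (Fin m) (Fin m) A}
    (hU : dMat dbar U = rmulMat (dMat d U) P + rmulMat (dMat d φ₀) U)
    (hW : dMat dbar W = rmulMat (dMat d Y) (1 + U * W) - lmulMat W (dMat d φ₀))
    (hPW : P * W = Y * (1 + U * W)) :
    dMat dbar (1 + U * W) = rmulMat (dMat d (U * Y)) (1 + U * W)
      + rmulMat (dMat d φ₀) (1 + U * W) - lmulMat (1 + U * W) (dMat d φ₀) := by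
  rw [hdbar.dMat_add, hdbar.dMat_one, zero_add, hdbar.dMat_mul, hU, hW, hd.dMat_mul,
    rmulMat_add_left, rmulMat_rmulMat, hPW]
  simp only [← rmulMat_rmulMat, lmulMat_add_right, lmulMat_sub_right, lmulMat_rmulMat,
    lmulMat_lmulMat, rmulMat_add_left, rmulMat_add_right, rmulMat_one, lmulMat_add_left,
    lmulMat_one]
  abel

include hdbar in
lemma dbar_mul_of_miura {G g₀ : Matrix (Fin m) (Fin m) A} {ω ψ : Matrix (Fin m) (Fin m) Ω}
    (hg₀ : dMat dbar g₀ = rmulMat ω g₀)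
    (hG : dMat dbar G = rmulMat ψ G + rmulMat ω G - lmulMat G ω) :
    dMat dbar (G * g₀) = rmulMat (ω + ψ) (G * g₀) := by
  simp only [hdbar.dMat_mul, hG, hg₀, lmulMat_rmulMat, ← rmulMat_rmulMat, rmulMat_add_left,
    rmulMat_sub_left]
  abel

end Darboux

end BimoduleMatrices

theorem stmt_17_general {A Ω : Type*} [Ring A] [AddCommGroup Ω] [Module A Ω] [Module Aᵐᵒᵖ Ω]
    [SMulCommClass A Aᵐᵒᵖ Ω]
    (d dbar : A → Ω)
    (hd_add : ∀ a b : A, d (a + b) = d a + d b)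
    (hdbar_add : ∀ a b : A, dbar (a + b) = dbar a + dbar b)
    (hd_leib : ∀ a b : A, d (a * b) = op b • d a + a • d b)
    (hdbar_leib : ∀ a b : A, dbar (a * b) = op b • dbar a + a • dbar b)
    {m n : ℕ}
    (φ₀ g₀ g₀inv : Matrix (Fin m) (Fin m) A)
    (hg₀r : g₀inv * g₀ = 1)
    (hMiura₀ : rmulMat (dMat dbar g₀) g₀inv = dMat d φ₀)
    (P Q : Matrix (Fin n) (Fin n) A)
    (hQ : dMat dbar Q - lmulMat Q (dMat d Q) = 0)
    (U : Matrix (Fin m) (Fin n) A) (V : Matrix (Fin n) (Fin m) A)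
    (hU : dMat dbar U = rmulMat (dMat d U) P + rmulMat (dMat d φ₀) U)
    (hV : dMat dbar V = lmulMat Q (dMat d V) - lmulMat V (dMat d φ₀))
    (X Xinv : Matrix (Fin n) (Fin n) A)
    (hXl : X * Xinv = 1) (hXr : Xinv * X = 1)
    (hSyl : X * P - Q * X = V * U)
    (hdX : dMat dbar X - rmulMat (dMat d X) P + rmulMat (dMat d Q) X
      + rmulMat (dMat d V) U = 0)
    (QXinv : Matrix (Fin n) (Fin n) A)
    (hQXl : Q * X * QXinv = 1) (hQXr : QXinv * (Q * X) = 1)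
    (φ g : Matrix (Fin m) (Fin m) A)
    (hφ : φ = φ₀ + U * Xinv * V)
    (hg : g = (1 + U * QXinv * V) * g₀) :
    dMat dbar g = rmulMat (dMat d φ) g := by
  subst hφ hg
  have hd : IsBimoduleDerivation d := ⟨hd_add, hd_leib⟩
  have hdbar : IsBimoduleDerivation dbar := ⟨hdbar_add, hdbar_leib⟩
  have hKQ : QXinv * Q = Xinv := left_inv_eq_right_inv (by rw [mul_assoc, hQXr]) hXl
  have hPW : P * (QXinv * V) = Xinv * V * (1 + U * (QXinv * V)) := by
    rw [← Matrix.mul_assoc, mul_eq_of_sylvester hXr hQXl hSyl]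
    simp only [Matrix.mul_add, Matrix.add_mul, Matrix.mul_one, Matrix.mul_assoc]
  have hK := dbar_QX_inv hdbar hQ hdX hQXl hQXr hKQ
  have hW := dbar_QX_inv_mul hd hdbar hV hXl hXr hKQ hK hPW
  have hG := dbar_one_add_mul hd hdbar hU hW hPW
  rw [Matrix.mul_assoc U Xinv, Matrix.mul_assoc U QXinv, hd.dMat_add]
  exact dbar_mul_of_miura hdbar (eq_rmulMat_of_rmulMat_eq hMiura₀ hg₀r) hG

/-- Binary Darboux transformation theorem in bidifferential calculus
(with `α = β = 0`): from a solution `(φ₀, g₀)` of the Miura equation `(d̄g₀)g₀⁻¹ = dφ₀`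
and solutions `P, Q, U, V, X` of the stated Riemann, linear and Sylvester-type equations,
`φ := φ₀ + U X⁻¹ V` and `g := (I + U (QX)⁻¹ V) g₀` again solve the Miura equation
`d̄g = (dφ)·g`. -/
theorem stmt_17 {A Ω : Type*} [Ring A] [AddCommGroup Ω] [Module A Ω] [Module Aᵐᵒᵖ Ω]
    [SMulCommClass A Aᵐᵒᵖ Ω]
    (d dbar : A → Ω)
    (hd_add : ∀ a b : A, d (a + b) = d a + d b)
    (hdbar_add : ∀ a b : A, dbar (a + b) = dbar a + dbar b)
    (hd_leib : ∀ a b : A, d (a * b) = op b • d a + a • d b)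
    (hdbar_leib : ∀ a b : A, dbar (a * b) = op b • dbar a + a • dbar b)
    {m n : ℕ}
    (φ₀ g₀ g₀inv : Matrix (Fin m) (Fin m) A)
    (hg₀l : g₀ * g₀inv = 1) (hg₀r : g₀inv * g₀ = 1)
    (hMiura₀ : rmulMat (dMat dbar g₀) g₀inv = dMat d φ₀)
    (P Q : Matrix (Fin n) (Fin n) A)
    (hP : dMat dbar P - rmulMat (dMat d P) P = 0)
    (hQ : dMat dbar Q - lmulMat Q (dMat d Q) = 0)
    (U : Matrix (Fin m) (Fin n) A) (V : Matrix (Fin n) (Fin m) A)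
    (hU : dMat dbar U = rmulMat (dMat d U) P + rmulMat (dMat d φ₀) U)
    (hV : dMat dbar V = lmulMat Q (dMat d V) - lmulMat V (dMat d φ₀))
    (X Xinv : Matrix (Fin n) (Fin n) A)
    (hXl : X * Xinv = 1) (hXr : Xinv * X = 1)
    (hSyl : X * P - Q * X = V * U)
    (hdX : dMat dbar X - rmulMat (dMat d X) P + rmulMat (dMat d Q) X
      + rmulMat (dMat d V) U = 0)
    (QXinv : Matrix (Fin n) (Fin n) A)
    (hQXl : Q * X * QXinv = 1) (hQXr : QXinv * (Q * X) = 1)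
    (φ g : Matrix (Fin m) (Fin m) A)
    (hφ : φ = φ₀ + U * Xinv * V)
    (hg : g = (1 + U * QXinv * V) * g₀) :
    dMat dbar g = rmulMat (dMat d φ) g :=
  stmt_17_general d dbar hd_add hdbar_add hd_leib hdbar_leib φ₀ g₀ g₀inv hg₀r hMiura₀ P Q hQ U V hU
    hV X Xinv hXl hXr hSyl hdX QXinv hQXl hQXr φ g hφ hg
end
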